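/- arXiv:2506.14806 — 7 statements merged into one kernel-verified Lean document; each statement's English description precedes it below -/
import Mathlib

section
/- Let L : ℝ^d → ℝ be smooth, μ ∈ (0,1), η > 0, and let β(t) be piecewise C² on [0,(N+1)η], solving β̇(t) = −G_k(β(t)) − η γ_k(β(t)) on each interval [kη,(k+1)η) with β(0) = β_0, where G_k, γ_k : ℝ^d → ℝ^d are smooth (G_{−1} = γ_{−1} = 0). Let β_k be the Heavy-Ball iterates and ε_k = β(kη) − β_k. Define the Taylor remainders I_k^+ = ∫_0^1 β̈(η(k+s))(1−s) ds (using the dynamics on [kη,(k+1)η)) and I_k^- = ∫_0^1 β̈(η(k−s))(1−s) ds (using the dynamics on [(k−1)η,kη)). Then for every k ≥ 1, ε_{k+1} − ε_k = μ(ε_k − ε_{k−1}) − η[G_k(β(kη)) − μ G_{k−1}(β(kη)) − ∇L(β(kη) − ε_k)] + η²[I_k^+ + μ I_k^- − γ_k(β(kη)) + μ γ_{k−1}(β(kη))], where G_{k−1} and γ_{k−1} are evaluated via the left limit of β̇ at t = kη. -/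
lemma taylor1 {E : Type*} [NormedAddCommGroup E] [NormedSpace ℝ E] [CompleteSpace E]
    {a b x y : ℝ} (hab : a < b) (hx : x ∈ Set.Icc a b) (hy : y ∈ Set.Icc a b)
    {f : ℝ → E} (hf : ContDiffOn ℝ 2 f (Set.Icc a b)) :
    f y = f x + (y - x) • derivWithin f (Set.Icc a b) x
      + ∫ s in (0:ℝ)..1, ((1 - s) * (y - x)^2) •
          derivWithin (fun u => derivWithin f (Set.Icc a b) u) (Set.Icc a b)
            (x + s * (y - x)) := by
  set S := Set.Icc a b with hS
  have hUD : UniqueDiffOn ℝ S := uniqueDiffOn_Icc hab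
  set f' := fun u => derivWithin f S u with hf'def
  set f'' := fun u => derivWithin f' S u with hf''def
  have hf'cd : ContDiffOn ℝ 1 f' S := hf.derivWithin hUD (by norm_num)
  have hdf : ∀ z ∈ S, HasDerivWithinAt f (f' z) S z := fun z hz =>
    ((hf.differentiableOn (by norm_num)) z hz).hasDerivWithinAt
  have hdf' : ∀ z ∈ S, HasDerivWithinAt f' (f'' z) S z := fun z hz =>
    ((hf'cd.differentiableOn (by norm_num)) z hz).hasDerivWithinAt
  have hcf'' : ContinuousOn f'' S :=
    hf'cd.continuousOn_derivWithin hUD (by norm_num)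
  set c : ℝ → ℝ := fun s => x + s * (y - x) with hcdef
  have hc : ∀ s : ℝ, HasDerivAt c (y - x) s := by
    intro s
    have := ((hasDerivAt_id s).mul_const (y - x)).const_add x
    simp only [id, one_mul] at this
    exact this
  have hmaps : Set.MapsTo c (Set.Icc (0:ℝ) 1) S := by
    intro s hs
    have := (convex_Icc a b).add_smul_sub_mem hx hy hs
    simpa [hcdef, hS, smul_eq_mul] using this
  set φ : ℝ → E := fun s => f (c s) + ((1 - s) * (y - x)) • f' (c s) with hφdef
  set ψ : ℝ → E := fun s => ((1 - s) * (y - x)^2) • f'' (c s) with hψdef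
  have hφ : ∀ s ∈ Set.Icc (0:ℝ) 1, HasDerivWithinAt φ (ψ s) (Set.Icc (0:ℝ) 1) s := by
    intro s hs
    have hz : c s ∈ S := hmaps hs
    have h1 : HasDerivWithinAt (fun u => f (c u)) ((y - x) • f' (c s))
        (Set.Icc (0:ℝ) 1) s :=
      (hdf (c s) hz).scomp s ((hc s).hasDerivWithinAt) hmaps
    have h2 : HasDerivWithinAt (fun u => f' (c u)) ((y - x) • f'' (c s))
        (Set.Icc (0:ℝ) 1) s :=
      (hdf' (c s) hz).scomp s ((hc s).hasDerivWithinAt) hmaps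
    have h3 : HasDerivAt (fun u : ℝ => (1 - u) * (y - x)) (-(y - x)) s := by
      simpa using ((hasDerivAt_const s (1:ℝ)).sub (hasDerivAt_id s)).mul_const (y - x)
    have h4 := (h3.hasDerivWithinAt (s := Set.Icc (0:ℝ) 1)).smul h2
    have h5 := h1.add h4
    convert h5 using 1
    show ((1 - s) * (y - x)^2) • f'' (c s) = _
    rw [smul_smul]
    module
    funext u; rfl
  have hcont : ContinuousOn φ (Set.Icc (0:ℝ) 1) := fun s hs =>
    (hφ s hs).continuousWithinAt
  have hderiv : ∀ s ∈ Set.Ioo (0:ℝ) 1, HasDerivWithinAt φ (ψ s) (Set.Ioi s) s := by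
    intro s hs
    exact ((hφ s (Set.Ioo_subset_Icc_self hs)).hasDerivAt
      (Icc_mem_nhds hs.1 hs.2)).hasDerivWithinAt
  have hint : IntervalIntegrable ψ MeasureTheory.volume 0 1 := by
    apply ContinuousOn.intervalIntegrable
    rw [Set.uIcc_of_le (by norm_num : (0:ℝ) ≤ 1)]
    apply ContinuousOn.smul
    · exact (continuousOn_const.sub continuousOn_id).mul continuousOn_const
    · exact hcf''.comp ((continuousOn_const.add (continuousOn_id.mul continuousOn_const))) hmaps
  have hFTC := intervalIntegral.integral_eq_sub_of_hasDeriv_right_of_le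
    (by norm_num : (0:ℝ) ≤ 1) hcont hderiv hint
  have hc1 : c 1 = y := by simp [hcdef]
  have hc0 : c 0 = x := by simp [hcdef]
  have hφ1 : φ 1 = f y := by simp [hφdef, hc1]
  have hφ0 : φ 0 = f x + (y - x) • f' x := by simp [hφdef, hc0]
  rw [hφ1, hφ0] at hFTC
  have : (∫ s in (0:ℝ)..1, ψ s) = f y - (f x + (y - x) • f' x) := hFTC
  rw [show (∫ s in (0:ℝ)..1, ((1 - s) * (y - x)^2) •
      derivWithin (fun u => derivWithin f S u) S (x + s * (y - x))) = ∫ s in (0:ℝ)..1, ψ s from rfl]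
  rw [this]
  abel


/-- The exact relation between consecutive discretization errors
of HBF and the Heavy-Ball iterates:
ε_{k+1} - ε_k = μ(ε_k - ε_{k-1})
  - η[G_k(β(kη)) - μ G_{k-1}(β(kη)) - ∇L(β(kη) - ε_k)]
  + η²[I_k⁺ + μ I_k⁻ - γ_k(β(kη)) + μ γ_{k-1}(β(kη))]. -/
theorem stmt_1 (d : ℕ) (μ η : ℝ) (hμ : μ ∈ Set.Ioo (0:ℝ) 1) (hη : 0 < η)
    (N : ℕ)
    (L : (Fin d → ℝ) → ℝ) (hL : ContDiff ℝ (⊤ : ℕ∞) L)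
    (gradL : (Fin d → ℝ) → Fin d → ℝ)
    (hgrad : ∀ x i, gradL x i = fderiv ℝ L x (Pi.single i 1))
    (G γ : ℕ → (Fin d → ℝ) → Fin d → ℝ)
    (hGsm : ∀ k, ContDiff ℝ (⊤ : ℕ∞) (G k)) (hγsm : ∀ k, ContDiff ℝ (⊤ : ℕ∞) (γ k))
    (β : ℝ → Fin d → ℝ) (b : ℕ → Fin d → ℝ)
    -- β is piecewise C² on [0,(N+1)η]
    (hreg : ∀ k : ℕ, k ≤ N →
      ContDiffOn ℝ 2 β (Set.Icc ((k : ℝ) * η) (((k : ℝ) + 1) * η)))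
    -- β solves the piecewise ODE (left limits at the right endpoints)
    (hdyn : ∀ k : ℕ, k ≤ N → ∀ t ∈ Set.Icc ((k : ℝ) * η) (((k : ℝ) + 1) * η),
      HasDerivWithinAt β (-G k (β t) - η • γ k (β t))
        (Set.Icc ((k : ℝ) * η) (((k : ℝ) + 1) * η)) t)
    -- Heavy-Ball iterates with β(0) = β₀ = b 0
    (hβ0 : β 0 = b 0)
    (hb1 : b 1 = b 0 - η • gradL (b 0))
    (hbrec : ∀ k : ℕ, b (k + 2) = b (k + 1) - η • gradL (b (k + 1))
      + μ • (b (k + 1) - b k))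
    -- discretization error
    (ε : ℕ → Fin d → ℝ) (hε : ∀ k : ℕ, ε k = β ((k : ℝ) * η) - b k)
    -- Taylor remainders, using the dynamics on [kη,(k+1)η) resp. [(k-1)η,kη)
    (Ip Im : ℕ → Fin d → ℝ)
    (hIp : ∀ k : ℕ, Ip k = ∫ s in (0:ℝ)..1, (1 - s) •
      derivWithin (fun u => derivWithin β
          (Set.Icc ((k : ℝ) * η) (((k : ℝ) + 1) * η)) u)
        (Set.Icc ((k : ℝ) * η) (((k : ℝ) + 1) * η)) (η * ((k : ℝ) + s)))
    (hIm : ∀ k : ℕ, Im k = ∫ s in (0:ℝ)..1, (1 - s) •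
      derivWithin (fun u => derivWithin β
          (Set.Icc (((k : ℝ) - 1) * η) ((k : ℝ) * η)) u)
        (Set.Icc (((k : ℝ) - 1) * η) ((k : ℝ) * η)) (η * ((k : ℝ) - s))) :
    ∀ k : ℕ, 1 ≤ k → k ≤ N →
      ε (k + 1) - ε k = μ • (ε k - ε (k - 1))
        - η • (G k (β ((k : ℝ) * η)) - μ • G (k - 1) (β ((k : ℝ) * η))
          - gradL (β ((k : ℝ) * η) - ε k))
        + (η ^ 2) • (Ip k + μ • Im k - γ k (β ((k : ℝ) * η))
          + μ • γ (k - 1) (β ((k : ℝ) * η))) := by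
  intro k hk1 hkN
  have hcast : ((k - 1 : ℕ) : ℝ) = (k : ℝ) - 1 := by
    push_cast [hk1]; ring
  have hk1N : k - 1 ≤ N := le_trans (Nat.sub_le k 1) hkN
  -- the two intervals
  set t : ℝ := (k : ℝ) * η with htdef
  have habp : (k : ℝ) * η < ((k : ℝ) + 1) * η := by nlinarith
  have habm : ((k : ℝ) - 1) * η < (k : ℝ) * η := by nlinarith
  -- rewrite hreg/hdyn for k-1
  have hregm : ContDiffOn ℝ 2 β (Set.Icc (((k : ℝ) - 1) * η) ((k : ℝ) * η)) := by
    have := hreg (k - 1) hk1N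
    rw [hcast] at this
    convert this using 3 <;> ring
  have hdynm : HasDerivWithinAt β (-G (k-1) (β t) - η • γ (k-1) (β t))
      (Set.Icc (((k : ℝ) - 1) * η) ((k : ℝ) * η)) t := by
    have h1 : t ∈ Set.Icc ((((k-1):ℕ) : ℝ) * η) (((((k-1):ℕ) : ℝ) + 1) * η) := by
      rw [hcast]
      constructor <;> [nlinarith; nlinarith]
    have := hdyn (k - 1) hk1N t h1
    rw [hcast] at this
    convert this using 2 <;> ring
  have hdynp : HasDerivWithinAt β (-G k (β t) - η • γ k (β t))
      (Set.Icc ((k : ℝ) * η) (((k : ℝ) + 1) * η)) t :=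
    hdyn k hkN t ⟨le_refl _, le_of_lt habp⟩
  -- derivWithin values
  have hUDp : UniqueDiffOn ℝ (Set.Icc ((k : ℝ) * η) (((k : ℝ) + 1) * η)) :=
    uniqueDiffOn_Icc habp
  have hUDm : UniqueDiffOn ℝ (Set.Icc (((k : ℝ) - 1) * η) ((k : ℝ) * η)) :=
    uniqueDiffOn_Icc habm
  have hdWp : derivWithin β (Set.Icc ((k : ℝ) * η) (((k : ℝ) + 1) * η)) t
      = -G k (β t) - η • γ k (β t) :=
    hdynp.derivWithin (hUDp t ⟨le_refl _, le_of_lt habp⟩)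
  have hdWm : derivWithin β (Set.Icc (((k : ℝ) - 1) * η) ((k : ℝ) * η)) t
      = -G (k-1) (β t) - η • γ (k-1) (β t) :=
    hdynm.derivWithin (hUDm t ⟨le_of_lt habm, le_refl _⟩)
  -- Taylor, plus side : x = kη, y = (k+1)η
  have hTp := taylor1 habp (f := β) ⟨le_refl _, le_of_lt habp⟩
    (Set.right_mem_Icc.2 (le_of_lt habp)) (hreg k hkN)
  -- Taylor, minus side : x = kη, y = (k-1)η
  have hTm := taylor1 habm (f := β) (Set.right_mem_Icc.2 (le_of_lt habm))
    ⟨le_refl _, le_of_lt habm⟩ hregm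
  -- identify the integrals with Ip and Im
  have hIp' : (∫ s in (0:ℝ)..1, ((1 - s) * (((k : ℝ) + 1) * η - (k : ℝ) * η)^2) •
      derivWithin (fun u => derivWithin β
          (Set.Icc ((k : ℝ) * η) (((k : ℝ) + 1) * η)) u)
        (Set.Icc ((k : ℝ) * η) (((k : ℝ) + 1) * η))
        ((k : ℝ) * η + s * (((k : ℝ) + 1) * η - (k : ℝ) * η)))
      = (η ^ 2) • Ip k := by
    rw [hIp, ← intervalIntegral.integral_smul]
    apply intervalIntegral.integral_congr
    intro s _
    simp only [smul_smul]
    rw [show (k : ℝ) * η + s * (((k : ℝ) + 1) * η - (k : ℝ) * η) = η * ((k : ℝ) + s) by ring]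
    congr 1
    ring
  have hIm' : (∫ s in (0:ℝ)..1, ((1 - s) * (((k : ℝ) - 1) * η - (k : ℝ) * η)^2) •
      derivWithin (fun u => derivWithin β
          (Set.Icc (((k : ℝ) - 1) * η) ((k : ℝ) * η)) u)
        (Set.Icc (((k : ℝ) - 1) * η) ((k : ℝ) * η))
        ((k : ℝ) * η + s * (((k : ℝ) - 1) * η - (k : ℝ) * η)))
      = (η ^ 2) • Im k := by
    rw [hIm, ← intervalIntegral.integral_smul]
    apply intervalIntegral.integral_congr
    intro s _
    simp only [smul_smul]
    rw [show (k : ℝ) * η + s * (((k : ℝ) - 1) * η - (k : ℝ) * η) = η * ((k : ℝ) - s) by ring]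
    congr 1
    ring
  rw [hIp', hdWp] at hTp
  rw [hIm', hdWm] at hTm
  -- recursion for b (k+1)
  have hb' : b (k + 1) = b k - η • gradL (b k) + μ • (b k - b (k - 1)) := by
    have h := hbrec (k - 1)
    rwa [show k - 1 + 2 = k + 1 from by omega, show k - 1 + 1 = k from by omega] at h
  -- errors
  have hε1 : ε (k + 1) = β (((k : ℝ) + 1) * η) - b (k + 1) := by
    rw [hε (k + 1)]; push_cast; ring_nf
  have hεm : ε (k - 1) = β (((k : ℝ) - 1) * η) - b (k - 1) := by
    rw [hε (k - 1), hcast]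
  have hεk : ε k = β t - b k := hε k
  rw [hε1, hεm, hεk, show β t - (β t - b k) = b k from by abel, hTp, hTm, hb']
  have h2 : ((k : ℝ) + 1) * η - (k : ℝ) * η = η := by ring
  have h3 : ((k : ℝ) - 1) * η - (k : ℝ) * η = -η := by ring
  rw [h2, h3, ← htdef]
  module
end

section
/- Let L : ℝ^d → ℝ be smooth with Lipschitz-continuous gradient on the relevant region, μ ∈ (0,1), α ≥ 1, and let β(t) solve the piecewise ODE β̇(t) = −G_k(β(t)) − η γ_k(β(t)) on [kη,(k+1)η) with β(0) = β_0, and let β_k be the Heavy-Ball iterates. Suppose (i) G_{−1} = 0 and G_k(x) = μ G_{k−1}(x) + ∇L(x) for all k ≥ 0 and x, and (ii) the Taylor remainders satisfy I_k^+ + μ I_k^- − γ_k + μ γ_{k−1} = O(η^{α−1}) uniformly over k ≤ N as η → 0. Then the discretization errors ε_k = β(kη) − β_k satisfy ε_k − ε_{k−1} = O(η^{α+1}) and ε_k = O(η^α) uniformly over k ≤ N as η → 0. -/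
set_option maxHeartbeats 1600000
set_option linter.unusedSectionVars false
set_option linter.unusedVariables false

open Set MeasureTheory intervalIntegral

section helpers
variable {E : Type*} [NormedAddCommGroup E] [NormedSpace ℝ E] [CompleteSpace E]

lemma hb_taylor {f : ℝ → E} {a b : ℝ} (hab : a < b)
    (hf : ContDiffOn ℝ 2 f (Set.Icc a b)) :
    ((∫ t in a..b, (b - t) • derivWithin (derivWithin f (Set.Icc a b)) (Set.Icc a b) t)
      = f b - f a - (b - a) • derivWithin f (Set.Icc a b) a) ∧
    ((∫ t in a..b, (t - a) • derivWithin (derivWithin f (Set.Icc a b)) (Set.Icc a b) t)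
      = (b - a) • derivWithin f (Set.Icc a b) b - f b + f a) := by
  set S := Set.Icc a b with hS
  have hu : UniqueDiffOn ℝ S := uniqueDiffOn_Icc hab
  set f1 := derivWithin f S with hf1def
  set f2 := derivWithin f1 S with hf2def
  have hf1 : ContDiffOn ℝ 1 f1 S := hf.derivWithin hu (by norm_num)
  have hc0 : ContinuousOn f S := hf.continuousOn
  have hc1 : ContinuousOn f1 S := hf1.continuousOn
  have hc2 : ContinuousOn f2 S := hf1.continuousOn_derivWithin hu le_rfl
  have hd1 : ∀ x ∈ Set.Ioo a b, HasDerivAt f (f1 x) x := fun x hx =>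
    (((hf.differentiableOn (by norm_num)) x (Ioo_subset_Icc_self hx)).hasDerivWithinAt).hasDerivAt
      (Icc_mem_nhds hx.1 hx.2)
  have hd2 : ∀ x ∈ Set.Ioo a b, HasDerivAt f1 (f2 x) x := fun x hx =>
    (((hf1.differentiableOn (by norm_num)) x (Ioo_subset_Icc_self hx)).hasDerivWithinAt).hasDerivAt
      (Icc_mem_nhds hx.1 hx.2)
  have huIcc : Set.uIcc a b = S := Set.uIcc_of_le hab.le
  have hc2' : ContinuousOn f2 (Set.uIcc a b) := by rwa [huIcc]
  constructor
  · have hw : ContinuousOn (fun t => (b - t) • f1 t + f t) S :=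
      ((continuousOn_const.sub continuousOn_id).smul hc1).add hc0
    have hderiv : ∀ x ∈ Set.Ioo a b,
        HasDerivWithinAt (fun t => (b - t) • f1 t + f t) ((b - x) • f2 x) (Set.Ioi x) x := by
      intro x hx
      have h := (((hasDerivAt_id x).const_sub b).smul (hd2 x hx)).add (hd1 x hx)
      have he : (b - x) • f2 x + (-1 : ℝ) • f1 x + f1 x = (b - x) • f2 x := by module
      simp only [id_eq] at h
      rw [he] at h
      exact h.hasDerivWithinAt
    have hint : IntervalIntegrable (fun t => (b - t) • f2 t) volume a b :=
      ((continuousOn_const.sub continuousOn_id).smul hc2').intervalIntegrable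
    have := integral_eq_sub_of_hasDeriv_right_of_le hab.le hw hderiv hint
    rw [this]
    simp only [sub_self, zero_smul, zero_add]
    module
  · have hw : ContinuousOn (fun t => (t - a) • f1 t - f t) S :=
      ((continuousOn_id.sub continuousOn_const).smul hc1).sub hc0
    have hderiv : ∀ x ∈ Set.Ioo a b,
        HasDerivWithinAt (fun t => (t - a) • f1 t - f t) ((x - a) • f2 x) (Set.Ioi x) x := by
      intro x hx
      have h := (((hasDerivAt_id x).sub_const a).smul (hd2 x hx)).sub (hd1 x hx)
      have he : (x - a) • f2 x + (1 : ℝ) • f1 x - f1 x = (x - a) • f2 x := by module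
      simp only [id_eq] at h
      rw [he] at h
      exact h.hasDerivWithinAt
    have hint : IntervalIntegrable (fun t => (t - a) • f2 t) volume a b :=
      ((continuousOn_id.sub continuousOn_const).smul hc2').intervalIntegrable
    have := integral_eq_sub_of_hasDeriv_right_of_le hab.le hw hderiv hint
    rw [this]
    simp only [sub_self, zero_smul, zero_sub]
    module

lemma hb_subst_fwd (g : ℝ → E) {η a b : ℝ} (hb : b = η * 1 + a) :
    (∫ t in a..b, (b - t) • g t) = (η^2) • ∫ s in (0:ℝ)..1, (1 - s) • g (η * s + a) := by
  subst hb
  have key := intervalIntegral.smul_integral_comp_mul_add (a := (0:ℝ)) (b := 1)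
    (fun t => ((η * 1 + a) - t) • g t) η a
  have h1 : ∀ s : ℝ, ((η * 1 + a) - (η * s + a)) • g (η * s + a)
      = η • ((1 - s) • g (η * s + a)) := by
    intro s; rw [smul_smul]; congr 1; ring
  simp only [h1, intervalIntegral.integral_smul, mul_zero, zero_add] at key
  rw [← key, smul_smul, pow_two]

lemma hb_subst_bwd (g : ℝ → E) {η a b : ℝ} (ha : a = -η * 1 + b) :
    (∫ t in a..b, (t - a) • g t) = (η^2) • ∫ s in (0:ℝ)..1, (1 - s) • g (-η * s + b) := by
  subst ha
  have key := intervalIntegral.smul_integral_comp_mul_add (a := (0:ℝ)) (b := 1)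
    (fun t => (t - (-η * 1 + b)) • g t) (-η) b
  have h1 : ∀ s : ℝ, ((-η * s + b) - (-η * 1 + b)) • g (-η * s + b)
      = η • ((1 - s) • g (-η * s + b)) := by
    intro s; rw [smul_smul]; congr 1; ring
  simp only [h1, intervalIntegral.integral_smul, mul_zero, zero_add] at key
  apply neg_injective
  rw [← intervalIntegral.integral_symm, ← key]
  module

end helpers


lemma hb_step_arith {μ Lp C₀ K c η y x A B D p q : ℝ}
    (hμ0 : 0 < μ) (hLp : 0 ≤ Lp) (hC₀ : 0 < C₀) (hK : 0 < K) (hc : 0 < c) (hη : 0 < η)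
    (hy : 0 < y) (hx : 0 ≤ x) (hxy : y = x*η)
    (hcoef : μ*K + Lp*(K/c) + C₀ ≤ K)
    (hqp : q ≤ p) (hp1 : 1 ≤ p) (hq0 : 0 ≤ q)
    (hA : A ≤ K*y*q) (hB : B ≤ (K/c)*x*(p-1))
    (hD : D ≤ μ*A + η*Lp*B + C₀*y) :
    D ≤ K*y*p := by
  have hKc : 0 ≤ K/c := by positivity
  have t1 := mul_le_mul_of_nonneg_left hA hμ0.le
  have t2 := mul_le_mul_of_nonneg_left hB (mul_nonneg hη.le hLp)
  have t3 : (η*Lp)*((K/c)*x*(p-1)) = Lp*(K/c)*(y*(p-1)) := by rw [hxy]; ring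
  have t4 := mul_le_mul_of_nonneg_left hqp (by positivity : (0:ℝ) ≤ μ*K*y)
  have t5 := mul_le_mul_of_nonneg_left (show p-1 ≤ p by linarith)
    (mul_nonneg (mul_nonneg hLp hKc) hy.le)
  have t6 := mul_le_mul_of_nonneg_left hp1 (by positivity : (0:ℝ) ≤ C₀*y)
  have t7 : (μ*K + Lp*(K/c) + C₀)*(y*p) ≤ K*(y*p) :=
    mul_le_mul_of_nonneg_right hcoef (by positivity)
  nlinarith [t1, t2, t3, t4, t5, t6, t7]

/-- If G satisfies the recursion G_{-1} = 0, G_k = μ G_{k-1} + ∇L,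
and the Taylor remainders satisfy I_k⁺ + μ I_k⁻ - γ_k + μ γ_{k-1} = O(η^{α-1})
uniformly over k ≤ N = ⌊T/η⌋ as η → 0, then the discretization errors satisfy
ε_k - ε_{k-1} = O(η^{α+1}) and ε_k = O(η^α) uniformly over k ≤ N as η → 0. -/
theorem stmt_2 (d : ℕ) (μ : ℝ) (hμ : μ ∈ Set.Ioo (0:ℝ) 1)
    (T : ℝ) (hT : 0 < T) (α : ℕ) (hα : 1 ≤ α)
    (L : (Fin d → ℝ) → ℝ) (hL : ContDiff ℝ (⊤ : ℕ∞) L)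
    (gradL : (Fin d → ℝ) → Fin d → ℝ)
    (hgrad : ∀ x i, gradL x i = fderiv ℝ L x (Pi.single i 1))
    -- Lipschitz-continuous gradient
    (Lip : NNReal) (hLip : LipschitzWith Lip gradL)
    -- (i) the recursion for G, with G_{-1} = 0
    (G : ℕ → (Fin d → ℝ) → Fin d → ℝ)
    (hG0 : G 0 = gradL)
    (hGrec : ∀ k x, G (k + 1) x = μ • G k x + gradL x)
    -- counter terms, HBF solutions and HB iterates, all indexed by η
    (γ : ℝ → ℕ → (Fin d → ℝ) → Fin d → ℝ)
    (β : ℝ → ℝ → Fin d → ℝ) (b : ℝ → ℕ → Fin d → ℝ)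
    (hreg : ∀ η : ℝ, 0 < η → ∀ k : ℕ,
      ContDiffOn ℝ 2 (β η) (Set.Icc ((k : ℝ) * η) (((k : ℝ) + 1) * η)))
    (hdyn : ∀ η : ℝ, 0 < η → ∀ k : ℕ,
      ∀ t ∈ Set.Icc ((k : ℝ) * η) (((k : ℝ) + 1) * η),
      HasDerivWithinAt (β η) (-G k (β η t) - η • γ η k (β η t))
        (Set.Icc ((k : ℝ) * η) (((k : ℝ) + 1) * η)) t)
    (hβ0 : ∀ η : ℝ, β η 0 = b η 0)
    (hb1 : ∀ η : ℝ, b η 1 = b η 0 - η • gradL (b η 0))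
    (hbrec : ∀ η : ℝ, ∀ k : ℕ, b η (k + 2) = b η (k + 1)
      - η • gradL (b η (k + 1)) + μ • (b η (k + 1) - b η k))
    (ε : ℝ → ℕ → Fin d → ℝ)
    (hε : ∀ η : ℝ, ∀ k : ℕ, ε η k = β η ((k : ℝ) * η) - b η k)
    -- Taylor remainders
    (Ip Im : ℝ → ℕ → Fin d → ℝ)
    (hIp : ∀ η : ℝ, ∀ k : ℕ, Ip η k = ∫ s in (0:ℝ)..1, (1 - s) •
      derivWithin (fun u => derivWithin (β η)
          (Set.Icc ((k : ℝ) * η) (((k : ℝ) + 1) * η)) u)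
        (Set.Icc ((k : ℝ) * η) (((k : ℝ) + 1) * η)) (η * ((k : ℝ) + s)))
    (hIm : ∀ η : ℝ, ∀ k : ℕ, Im η k = ∫ s in (0:ℝ)..1, (1 - s) •
      derivWithin (fun u => derivWithin (β η)
          (Set.Icc (((k : ℝ) - 1) * η) ((k : ℝ) * η)) u)
        (Set.Icc (((k : ℝ) - 1) * η) ((k : ℝ) * η)) (η * ((k : ℝ) - s)))
    -- (ii) the remainders are O(η^{α-1}) uniformly over k ≤ N = ⌊T/η⌋
    (hrem : ∃ C₀ η₀ : ℝ, 0 < C₀ ∧ 0 < η₀ ∧ ∀ η : ℝ, 0 < η → η < η₀ →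
      (‖Ip η 0 - γ η 0 (β η 0)‖ ≤ C₀ * η ^ (α - 1)) ∧
      ∀ k : ℕ, 1 ≤ k → k ≤ Nat.floor (T / η) →
        ‖Ip η k + μ • Im η k - γ η k (β η ((k : ℝ) * η))
          + μ • γ η (k - 1) (β η ((k : ℝ) * η))‖ ≤ C₀ * η ^ (α - 1)) :
    ∃ C η₁ : ℝ, 0 < C ∧ 0 < η₁ ∧ ∀ η : ℝ, 0 < η → η < η₁ →
      ∀ k : ℕ, k ≤ Nat.floor (T / η) →
        ‖ε η k‖ ≤ C * η ^ α ∧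
        (1 ≤ k → ‖ε η k - ε η (k - 1)‖ ≤ C * η ^ (α + 1)) := by
  obtain ⟨hμ0, hμ1⟩ := hμ
  obtain ⟨C₀, η₀, hC₀, hη₀, hrem'⟩ := hrem
  have h1μ : (0:ℝ) < 1 - μ := by linarith
  set Lp : ℝ := (Lip : ℝ) with hLpdef
  have hLp0 : 0 ≤ Lp := Lip.coe_nonneg
  set c : ℝ := (2*Lp + 1)/(1 - μ) with hcdef
  set K : ℝ := 2*C₀/(1 - μ) with hKdef
  have h2Lp : (0:ℝ) < 2*Lp + 1 := by positivity
  have hc : 0 < c := div_pos h2Lp h1μ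
  have hK : 0 < K := div_pos (by positivity) h1μ
  have hKcC : Lp*(K/c) ≤ C₀ := by
    have e : K/c = 2*C₀/(2*Lp+1) := by
      rw [hKdef, hcdef]; rw [div_div_div_cancel_right₀ h1μ.ne']
    rw [e, ← mul_div_assoc, div_le_iff₀ h2Lp]
    nlinarith
  have e2 : (1-μ)*K = 2*C₀ := by
    rw [hKdef]; field_simp
  have hcoef : μ*K + Lp*(K/c) + C₀ ≤ K := by nlinarith
  have hC0K : C₀ ≤ K := by nlinarith
  have hCpos : 0 < (K + K/c) * Real.exp (c*T) + 1 := by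
    have h1 := Real.exp_pos (c*T)
    have h2 := div_pos hK hc
    nlinarith
  refine ⟨(K + K/c) * Real.exp (c*T) + 1, η₀, hCpos, hη₀, ?_⟩
  intro η hη hηη k hkN
  have hr := hrem' η hη hηη
  -- Taylor expansions
  have Tfwd : ∀ j : ℕ, β η (((j:ℝ)+1)*η) = β η ((j:ℝ)*η)
      + η • (-G j (β η ((j:ℝ)*η)) - η • γ η j (β η ((j:ℝ)*η)))
      + (η^2) • Ip η j := by
    intro j
    have hab : (j:ℝ)*η < ((j:ℝ)+1)*η := by
      have h : ((j:ℝ)+1)*η = (j:ℝ)*η + η := by ring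
      rw [h]; linarith
    have tay := (hb_taylor hab (hreg η hη j)).1
    have sub := hb_subst_fwd
      (g := derivWithin (derivWithin (β η) (Set.Icc ((j:ℝ)*η) (((j:ℝ)+1)*η)))
          (Set.Icc ((j:ℝ)*η) (((j:ℝ)+1)*η)))
      (show ((j:ℝ)+1)*η = η*1 + (j:ℝ)*η by ring)
    have hIp' : Ip η j = ∫ s in (0:ℝ)..1, (1 - s) •
        derivWithin (derivWithin (β η) (Set.Icc ((j:ℝ)*η) (((j:ℝ)+1)*η)))
          (Set.Icc ((j:ℝ)*η) (((j:ℝ)+1)*η)) (η * s + (j:ℝ)*η) := by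
      rw [hIp η j]
      simp only [show ∀ s:ℝ, η*((j:ℝ)+s) = η*s+(j:ℝ)*η from fun s => by ring]
    have hD := (hdyn η hη j ((j:ℝ)*η) (Set.left_mem_Icc.2 hab.le)).derivWithin
      ((uniqueDiffOn_Icc hab) _ (Set.left_mem_Icc.2 hab.le))
    have h2 : (η^2) • Ip η j = β η (((j:ℝ)+1)*η) - β η ((j:ℝ)*η)
        - (((j:ℝ)+1)*η - (j:ℝ)*η) • (-G j (β η ((j:ℝ)*η)) - η • γ η j (β η ((j:ℝ)*η))) := by
      rw [hIp', ← sub, ← hD]; exact tay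
    rw [h2]; module
  have Tbwd : ∀ j : ℕ, β η ((j:ℝ)*η) = β η (((j:ℝ)+1)*η)
      - η • (-G j (β η (((j:ℝ)+1)*η)) - η • γ η j (β η (((j:ℝ)+1)*η)))
      + (η^2) • Im η (j+1) := by
    intro j
    have hab : (j:ℝ)*η < ((j:ℝ)+1)*η := by
      have h : ((j:ℝ)+1)*η = (j:ℝ)*η + η := by ring
      rw [h]; linarith
    have tay := (hb_taylor hab (hreg η hη j)).2
    have sub := hb_subst_bwd
      (g := derivWithin (derivWithin (β η) (Set.Icc ((j:ℝ)*η) (((j:ℝ)+1)*η)))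
          (Set.Icc ((j:ℝ)*η) (((j:ℝ)+1)*η)))
      (show (j:ℝ)*η = -η*1 + ((j:ℝ)+1)*η by ring)
    have hIm' : Im η (j+1) = ∫ s in (0:ℝ)..1, (1 - s) •
        derivWithin (derivWithin (β η) (Set.Icc ((j:ℝ)*η) (((j:ℝ)+1)*η)))
          (Set.Icc ((j:ℝ)*η) (((j:ℝ)+1)*η)) (-η * s + ((j:ℝ)+1)*η) := by
      rw [hIm η (j+1)]
      push_cast
      simp only [show (((j:ℝ)+1)-1)*η = (j:ℝ)*η from by ring,
        show ∀ s:ℝ, η*((j:ℝ)+1-s) = -η*s+((j:ℝ)+1)*η from fun s => by ring]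
    have hD := (hdyn η hη j (((j:ℝ)+1)*η) (Set.right_mem_Icc.2 hab.le)).derivWithin
      ((uniqueDiffOn_Icc hab) _ (Set.right_mem_Icc.2 hab.le))
    have h2 : (η^2) • Im η (j+1) = (((j:ℝ)+1)*η - (j:ℝ)*η) •
          (-G j (β η (((j:ℝ)+1)*η)) - η • γ η j (β η (((j:ℝ)+1)*η)))
        - β η (((j:ℝ)+1)*η) + β η ((j:ℝ)*η) := by
      rw [hIm', ← sub, ← hD]; exact tay
    rw [h2]; module
  have hε0 : ε η 0 = 0 := by
    rw [hε η 0]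
    simp [hβ0 η]
  have hbase : ε η 1 = (η^2) • (Ip η 0 - γ η 0 (b η 0)) := by
    have h1 := Tfwd 0
    simp only [Nat.cast_zero, zero_add, one_mul, zero_mul] at h1
    rw [hβ0 η, hG0] at h1
    rw [hε η 1]
    simp only [Nat.cast_one, one_mul]
    rw [h1, hb1 η]
    module
  have hrec_id : ∀ m : ℕ, ε η (m+2) - ε η (m+1) = μ • (ε η (m+1) - ε η m)
      - η • (gradL (β η (((m:ℝ)+1)*η)) - gradL (b η (m+1)))
      + (η^2) • (Ip η (m+1) + μ • Im η (m+1) - γ η (m+1) (β η (((m:ℝ)+1)*η))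
        + μ • γ η m (β η (((m:ℝ)+1)*η))) := by
    intro m
    have h1 := Tfwd (m+1)
    push_cast at h1
    rw [show ((m:ℝ)+1+1) = (m:ℝ)+2 from by ring] at h1
    have h2 := Tbwd m
    have h3 := hbrec η m
    have h4 := hGrec m (β η (((m:ℝ)+1)*η))
    rw [hε η (m+2), hε η (m+1), hε η m]
    push_cast
    rw [h1, h2, h3, h4]
    module
  have hnorm_rec : ∀ m : ℕ, m+1 ≤ Nat.floor (T/η) →
      ‖ε η (m+2) - ε η (m+1)‖ ≤ μ*‖ε η (m+1) - ε η m‖ + η*Lp*‖ε η (m+1)‖ + C₀*η^(α+1) := by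
    intro m hmN
    rw [hrec_id m]
    have hx : β η (((m:ℝ)+1)*η) - b η (m+1) = ε η (m+1) := by
      rw [hε η (m+1)]
      push_cast
      ring_nf
    have t1 : ‖μ • (ε η (m+1) - ε η m)‖ = μ*‖ε η (m+1) - ε η m‖ := by
      rw [norm_smul, Real.norm_eq_abs, abs_of_pos hμ0]
    have t2 : ‖η • (gradL (β η (((m:ℝ)+1)*η)) - gradL (b η (m+1)))‖
        ≤ η*(Lp*‖ε η (m+1)‖) := by
      rw [norm_smul, Real.norm_eq_abs, abs_of_pos hη]
      refine mul_le_mul_of_nonneg_left ?_ hη.le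
      have hd := hLip.dist_le_mul (β η (((m:ℝ)+1)*η)) (b η (m+1))
      rw [dist_eq_norm, dist_eq_norm, hx] at hd
      exact hd
    have t3 : ‖(η^2) • (Ip η (m+1) + μ • Im η (m+1) - γ η (m+1) (β η (((m:ℝ)+1)*η))
        + μ • γ η m (β η (((m:ℝ)+1)*η)))‖ ≤ C₀*η^(α+1) := by
      rw [norm_smul, Real.norm_eq_abs, abs_of_nonneg (by positivity : (0:ℝ) ≤ η^2)]
      have hr2 := hr.2 (m+1) (Nat.le_add_left 1 m) hmN
      simp only [Nat.add_sub_cancel] at hr2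
      push_cast at hr2
      calc η^2 * ‖Ip η (m+1) + μ • Im η (m+1) - γ η (m+1) (β η (((m:ℝ)+1)*η))
            + μ • γ η m (β η (((m:ℝ)+1)*η))‖
          ≤ η^2*(C₀*η^(α-1)) := mul_le_mul_of_nonneg_left hr2 (by positivity)
        _ = C₀*η^(α+1) := by
            rw [show α+1 = 2+(α-1) from by omega, pow_add]; ring
    calc ‖μ • (ε η (m+1) - ε η m)
          - η • (gradL (β η (((m:ℝ)+1)*η)) - gradL (b η (m+1)))
          + (η^2) • (Ip η (m+1) + μ • Im η (m+1) - γ η (m+1) (β η (((m:ℝ)+1)*η))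
            + μ • γ η m (β η (((m:ℝ)+1)*η)))‖
        ≤ ‖μ • (ε η (m+1) - ε η m)
          - η • (gradL (β η (((m:ℝ)+1)*η)) - gradL (b η (m+1)))‖
          + ‖(η^2) • (Ip η (m+1) + μ • Im η (m+1) - γ η (m+1) (β η (((m:ℝ)+1)*η))
            + μ • γ η m (β η (((m:ℝ)+1)*η)))‖ := norm_add_le _ _
      _ ≤ ‖μ • (ε η (m+1) - ε η m)‖
          + ‖η • (gradL (β η (((m:ℝ)+1)*η)) - gradL (b η (m+1)))‖
          + ‖(η^2) • (Ip η (m+1) + μ • Im η (m+1) - γ η (m+1) (β η (((m:ℝ)+1)*η))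
            + μ • γ η m (β η (((m:ℝ)+1)*η)))‖ := by
            have := norm_sub_le (μ • (ε η (m+1) - ε η m))
              (η • (gradL (β η (((m:ℝ)+1)*η)) - gradL (b η (m+1))))
            linarith
      _ ≤ μ*‖ε η (m+1) - ε η m‖ + η*Lp*‖ε η (m+1)‖ + C₀*η^(α+1) := by
            rw [t1]
            have := t2
            have := t3
            nlinarith [this]
  have hone : (1:ℝ) ≤ 1 + c*η := by nlinarith
  have hb1' : ‖ε η 1‖ ≤ C₀*η^(α+1) := by
    rw [hbase, norm_smul, Real.norm_eq_abs, abs_of_nonneg (by positivity : (0:ℝ) ≤ η^2)]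
    have hr1 := hr.1
    rw [hβ0 η] at hr1
    calc η^2*‖Ip η 0 - γ η 0 (b η 0)‖ ≤ η^2*(C₀*η^(α-1)) :=
          mul_le_mul_of_nonneg_left hr1 (by positivity)
      _ = C₀*η^(α+1) := by rw [show α+1 = 2+(α-1) from by omega, pow_add]; ring
  have main : ∀ j : ℕ, 1 ≤ j → j ≤ Nat.floor (T/η) →
      ‖ε η j - ε η (j-1)‖ ≤ K*η^(α+1)*(1+c*η)^(j-1) ∧
      ‖ε η j‖ ≤ (K/c)*η^α*((1+c*η)^j - 1) := by
    intro j hj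
    induction j, hj using Nat.le_induction with
    | base =>
      intro h1N
      have hy : (0:ℝ) < η^(α+1) := pow_pos hη _
      constructor
      · simp only [show (1:ℕ)-1 = 0 from rfl, hε0, sub_zero, pow_zero, mul_one]
        nlinarith
      · have hc1 : (K/c)*η^α*((1+c*η)^1 - 1) = K*η^(α+1) := by
          rw [pow_one, pow_succ]
          field_simp
          ring
        rw [hc1]
        nlinarith
    | succ n hn ih =>
      intro hn1N
      have hnN : n ≤ Nat.floor (T/η) := Nat.le_of_succ_le hn1N
      obtain ⟨ihδ, ihε⟩ := ih hnN
      obtain ⟨m, rfl⟩ : ∃ m, n = m + 1 := ⟨n - 1, by omega⟩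
      simp only [Nat.add_sub_cancel] at ihδ ⊢
      simp only [show m+1+1 = m+2 from rfl] at *
      have hrec := hnorm_rec m (by omega)
      have hqm : (1+c*η)^m ≤ (1+c*η)^(m+1) := pow_le_pow_right₀ hone (Nat.le_succ m)
      have hp1 : (1:ℝ) ≤ (1+c*η)^(m+1) := one_le_pow₀ hone
      have hy : (0:ℝ) < η^(α+1) := pow_pos hη _
      have hδnew : ‖ε η (m+2) - ε η (m+1)‖ ≤ K*η^(α+1)*(1+c*η)^(m+1) :=
        hb_step_arith hμ0 hLp0 hC₀ hK hc hη hy (le_of_lt (pow_pos hη α))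
          (by rw [pow_succ]) hcoef hqm hp1 (by positivity) ihδ ihε hrec
      constructor
      · exact hδnew
      · have tri : ‖ε η (m+2)‖ ≤ ‖ε η (m+1)‖ + ‖ε η (m+2) - ε η (m+1)‖ := by
          calc ‖ε η (m+2)‖ = ‖ε η (m+1) + (ε η (m+2) - ε η (m+1))‖ := by
                congr 1; abel
            _ ≤ ‖ε η (m+1)‖ + ‖ε η (m+2) - ε η (m+1)‖ := norm_add_le _ _
        have efin : (K/c)*η^α*((1+c*η)^(m+1) - 1) + K*η^(α+1)*(1+c*η)^(m+1)
            = (K/c)*η^α*((1+c*η)^(m+2) - 1) := by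
          rw [show m+2 = (m+1)+1 from rfl, pow_succ ((1:ℝ)+c*η) (m+1),
            pow_succ η α]
          field_simp
          ring
        linarith
  rcases Nat.eq_zero_or_pos k with rfl | hk1
  · constructor
    · rw [hε0, norm_zero]
      positivity
    · intro h
      exact absurd h (by omega)
  · obtain ⟨hδk, hεk⟩ := main k hk1 hkN
    have hkT : (k:ℝ)*η ≤ T := by
      have h1 : (k:ℝ) ≤ (Nat.floor (T/η) : ℝ) := Nat.cast_le.mpr hkN
      have h2 : ((Nat.floor (T/η) : ℕ) : ℝ) ≤ T/η := Nat.floor_le (by positivity)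
      have h3 : (k:ℝ) ≤ T/η := le_trans h1 h2
      calc (k:ℝ)*η ≤ (T/η)*η := by nlinarith
        _ = T := by field_simp
    have hexp : (1+c*η)^k ≤ Real.exp (c*T) := by
      calc (1+c*η)^k ≤ (Real.exp (c*η))^k :=
            pow_le_pow_left₀ (by positivity) (by linarith [Real.add_one_le_exp (c*η)]) k
        _ = Real.exp ((k:ℝ)*(c*η)) := by rw [← Real.exp_nat_mul]
        _ ≤ Real.exp (c*T) := Real.exp_le_exp.2 (by nlinarith)
    have hexp' : (1+c*η)^(k-1) ≤ Real.exp (c*T) :=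
      le_trans (pow_le_pow_right₀ hone (Nat.sub_le k 1)) hexp
    have hKc0 : 0 < K/c := div_pos hK hc
    have hexpos := Real.exp_pos (c*T)
    have hyα : (0:ℝ) < η^α := pow_pos hη _
    have hyα1 : (0:ℝ) < η^(α+1) := pow_pos hη _
    constructor
    · calc ‖ε η k‖ ≤ (K/c)*η^α*((1+c*η)^k - 1) := hεk
        _ ≤ ((K + K/c) * Real.exp (c*T) + 1)*η^α := by
            nlinarith [mul_le_mul_of_nonneg_left hexp (mul_pos hKc0 hyα).le,
              mul_pos (mul_pos hK hexpos) hyα, mul_pos hKc0 hyα]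
    · intro _
      calc ‖ε η k - ε η (k-1)‖ ≤ K*η^(α+1)*(1+c*η)^(k-1) := hδk
        _ ≤ ((K + K/c) * Real.exp (c*T) + 1)*η^(α+1) := by
            nlinarith [mul_le_mul_of_nonneg_left hexp' (mul_pos hK hyα1).le,
              mul_pos (mul_pos hKc0 hexpos) hyα1, mul_pos (mul_pos hK hexpos) hyα1]
end

section
/- Let L : ℝ^d → ℝ be twice continuously differentiable, μ ∈ (0,1), and define G_j = ((1 − μ^{j+1})/(1 − μ)) ∇L for j ≥ 0 with G_{−1} = 0, χ_j^{(0)} = (1/2)[(G_j·∇)G_j + μ (G_{j−1}·∇)G_{j−1}], and γ_k^{(0)} = Σ_{j=0}^{k} μ^{k−j} χ_j^{(0)}. Then at every point of ℝ^d, γ_k^{(0)} = (∇²L ∇L / (2(1−μ)²)) · Σ_{j=0}^{k} μ^{k−j}[(1 − μ^{j+1})² + μ(1 − μ^j)²]. -/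
/-- Partial derivative of a scalar function on ℝ^d in the i-th coordinate
direction. -/
noncomputable def pd {d : ℕ} (f : (Fin d → ℝ) → ℝ) (i : Fin d)
    (x : Fin d → ℝ) : ℝ :=
  fderiv ℝ f x (Pi.single i 1)

/-- The Lie differential operator (F·∇)G acting componentwise:
((F·∇)G)_i = Σ_j F_j ∂_j G_i. -/
noncomputable def lieOp {d : ℕ} (F G : (Fin d → ℝ) → Fin d → ℝ)
    (x : Fin d → ℝ) : Fin d → ℝ :=
  fun i => ∑ j, F x j * pd (fun y => G y i) j x

lemma pd_eq_snd {d : ℕ} (L : (Fin d → ℝ) → ℝ) (hL : ContDiff ℝ 2 L)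
    (i j : Fin d) (x : Fin d → ℝ) :
    pd (pd L i) j x = fderiv ℝ (fderiv ℝ L) x (Pi.single j 1) (Pi.single i 1) := by
  have hdf : DifferentiableAt ℝ (fderiv ℝ L) x := by
    have := (hL.fderiv_right (m := 1) (by norm_num)).differentiable one_ne_zero
    exact this x
  unfold pd
  rw [show (fun y => fderiv ℝ L y (Pi.single i 1)) =
      (fun y => (fderiv ℝ L y) ((fun _ : Fin d → ℝ => (Pi.single i 1 : Fin d → ℝ)) y)) from rfl,
    fderiv_clm_apply hdf (differentiableAt_const _)]
  simp

lemma pd_symm {d : ℕ} (L : (Fin d → ℝ) → ℝ) (hL : ContDiff ℝ 2 L)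
    (i j : Fin d) (x : Fin d → ℝ) :
    pd (pd L i) j x = pd (pd L j) i x := by
  rw [pd_eq_snd L hL i j x, pd_eq_snd L hL j i x]
  exact hL.contDiffAt.isSymmSndFDerivAt (by simp [minSmoothness_of_isRCLikeNormedField]) _ _

lemma lie_scaled {d : ℕ} (L : (Fin d → ℝ) → ℝ) (hL : ContDiff ℝ 2 L)
    (gradL : (Fin d → ℝ) → Fin d → ℝ) (hgrad : ∀ x i, gradL x i = pd L i x)
    (c : ℝ) (F : (Fin d → ℝ) → Fin d → ℝ) (hF : ∀ x, F x = c • gradL x)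
    (x : Fin d → ℝ) (i : Fin d) :
    lieOp F F x i = c ^ 2 * ∑ l, pd (pd L l) i x * pd L l x := by
  have hdpd : ∀ m : Fin d, DifferentiableAt ℝ (pd L m) x := by
    intro m
    have hdf : DifferentiableAt ℝ (fderiv ℝ L) x :=
      ((hL.fderiv_right (m := 1) (by norm_num)).differentiable one_ne_zero) x
    exact hdf.clm_apply (differentiableAt_const _)
  unfold lieOp
  have key : ∀ m : Fin d, pd (fun y => F y i) m x = c * pd (pd L i) m x := by
    intro m
    have : (fun y => F y i) = fun y => c * pd L i y := by
      funext y; rw [hF y]; simp [hgrad]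
    rw [this]
    unfold pd at hdpd ⊢
    rw [fderiv_const_mul (hdpd i)]
    simp
  calc ∑ m, F x m * pd (fun y => F y i) m x
      = ∑ m, c ^ 2 * (pd (pd L m) i x * pd L m x) := by
        apply Finset.sum_congr rfl
        intro m _
        rw [key m, hF x, pd_symm L hL i m x]
        simp [hgrad]; ring
    _ = c ^ 2 * ∑ l, pd (pd L l) i x * pd L l x := by rw [Finset.mul_sum]

/-- With G_j = ((1-μ^{j+1})/(1-μ))∇L (and G_{-1} = 0),
χ_j^{(0)} = (1/2)[(G_j·∇)G_j + μ(G_{j-1}·∇)G_{j-1}] and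
γ_k^{(0)} = Σ_{j=0}^k μ^{k-j} χ_j^{(0)}, one has
γ_k^{(0)} = (∇²L ∇L/(2(1-μ)²)) Σ_{j=0}^k μ^{k-j}[(1-μ^{j+1})² + μ(1-μ^j)²]. -/
theorem stmt_6 (d : ℕ) (μ : ℝ) (hμ : μ ∈ Set.Ioo (0:ℝ) 1)
    (L : (Fin d → ℝ) → ℝ) (hL : ContDiff ℝ 2 L)
    (gradL : (Fin d → ℝ) → Fin d → ℝ) (hgrad : ∀ x i, gradL x i = pd L i x)
    (G Gpred : ℕ → (Fin d → ℝ) → Fin d → ℝ)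
    (hG : ∀ j x, G j x = ((1 - μ ^ (j + 1)) / (1 - μ)) • gradL x)
    -- Gpred j represents G_{j-1}; at j = 0 this is G_{-1} = 0
    (hGpred : ∀ j x, Gpred j x = ((1 - μ ^ j) / (1 - μ)) • gradL x)
    (χ : ℕ → (Fin d → ℝ) → Fin d → ℝ)
    (hχ : ∀ j x, χ j x =
      (1 / 2 : ℝ) • (lieOp (G j) (G j) x + μ • lieOp (Gpred j) (Gpred j) x))
    (γ : ℕ → (Fin d → ℝ) → Fin d → ℝ)
    (hγ : ∀ k x, γ k x = ∑ j ∈ Finset.range (k + 1), μ ^ (k - j) • χ j x) :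
    ∀ k x i, γ k x i =
      ((∑ l, pd (pd L l) i x * pd L l x) / (2 * (1 - μ) ^ 2)) *
        ∑ j ∈ Finset.range (k + 1),
          μ ^ (k - j) * ((1 - μ ^ (j + 1)) ^ 2 + μ * (1 - μ ^ j) ^ 2) := by
  intro k x i
  have hμ1 : (1 : ℝ) - μ ≠ 0 := by have := hμ.2; intro h; linarith [h]
  set S := ∑ l, pd (pd L l) i x * pd L l x with hS
  have hlie : ∀ j : ℕ, lieOp (G j) (G j) x i =
      ((1 - μ ^ (j + 1)) / (1 - μ)) ^ 2 * S :=
    fun j => lie_scaled L hL gradL hgrad _ (G j) (hG j) x i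
  have hlie' : ∀ j : ℕ, lieOp (Gpred j) (Gpred j) x i =
      ((1 - μ ^ j) / (1 - μ)) ^ 2 * S :=
    fun j => lie_scaled L hL gradL hgrad _ (Gpred j) (hGpred j) x i
  rw [hγ k x]
  rw [Finset.mul_sum]
  rw [Finset.sum_apply]
  apply Finset.sum_congr rfl
  intro j _
  have : (μ ^ (k - j) • χ j x) i = μ ^ (k - j) * χ j x i := rfl
  rw [this, hχ j x]
  have hχi : χ j x i = (1/2 : ℝ) * (lieOp (G j) (G j) x i + μ * lieOp (Gpred j) (Gpred j) x i) := by
    rw [hχ j x]; rfl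
  show μ ^ (k - j) * ((1 / 2 : ℝ) • (lieOp (G j) (G j) x + μ • lieOp (Gpred j) (Gpred j) x)) i
      = S / (2 * (1 - μ) ^ 2) * (μ ^ (k - j) * ((1 - μ ^ (j + 1)) ^ 2 + μ * (1 - μ ^ j) ^ 2))
  have : ((1 / 2 : ℝ) • (lieOp (G j) (G j) x + μ • lieOp (Gpred j) (Gpred j) x)) i
      = (1/2 : ℝ) * (lieOp (G j) (G j) x i + μ * lieOp (Gpred j) (Gpred j) x i) := rfl
  rw [this, hlie j, hlie' j]
  field_simp
end

section
/- Let L : ℝ^d → ℝ be three times continuously differentiable and μ ∈ (0,1). Define ω₁ = ∇²L(∇²L ∇L) (components (ω₁)_i = Σ_{j,k} ∂_{ij}L ∂_{jk}L ∂_kL) and ω₂ = (∇L·∇)(∇²L ∇L) (components (ω₂)_i = Σ_{k} ∂_kL ∂_k(Σ_j ∂_{ij}L ∂_jL)). Let γ_k^{(1)} be the second-order HBF counter term defined by γ_k^{(1)} = Σ_{j=0}^{k} μ^{k−j} χ_j^{(1)} with χ_j^{(1)} = (1/2)[(γ_j^{(0)}·∇)G_j + μ(γ_{j−1}^{(0)}·∇)G_{j−1}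 + (G_j·∇)γ_j^{(0)} + μ(G_{j−1}·∇)γ_{j−1}^{(0)}] − (1/6)[(G_j·∇)((G_j·∇)G_j) − μ(G_{j−1}·∇)((G_{j−1}·∇)G_{j−1})], where G_j = ((1−μ^{j+1})/(1−μ))∇L and γ_j^{(0)} is the first-order counter term. Then at every point of ℝ^d, γ_k^{(1)} → ((1+μ)²/(4(1−μ)^5)) [ω₁ + ((1+10μ+μ²)/(3(1+μ)²)) ω₂] as k → ∞. -/
open Filter Finset

/- ### Auxiliary scalar sequences -/

noncomputable def auxS (μ : ℝ) (j : ℕ) : ℝ :=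
  ∑ m ∈ Finset.range (j + 1), μ ^ (j - m) * ((1 - μ ^ (m + 1)) ^ 2 + μ * (1 - μ ^ m) ^ 2)

noncomputable def auxc (μ : ℝ) (j : ℕ) : ℝ := auxS μ j / (2 * (1 - μ) ^ 2)

noncomputable def auxcp (μ : ℝ) : ℕ → ℝ
  | 0 => 0
  | j + 1 => auxc μ j

noncomputable def auxa (μ : ℝ) (j : ℕ) : ℝ := (1 - μ ^ (j + 1)) / (1 - μ)

noncomputable def auxb (μ : ℝ) (j : ℕ) : ℝ := (1 - μ ^ j) / (1 - μ)

noncomputable def auxA (μ : ℝ) (j : ℕ) : ℝ :=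
  (1 / 2) * (auxc μ j * auxa μ j + μ * (auxcp μ j * auxb μ j))

noncomputable def auxB (μ : ℝ) (j : ℕ) : ℝ :=
  auxA μ j - (1 / 6) * ((auxa μ j) ^ 3 - μ * (auxb μ j) ^ 3)

noncomputable def clim (μ : ℝ) : ℝ := ((1 + μ) / (1 - μ)) / (2 * (1 - μ) ^ 2)

noncomputable def Alim (μ : ℝ) : ℝ :=
  (1 / 2) * (clim μ * (1 / (1 - μ)) + μ * (clim μ * (1 / (1 - μ))))

noncomputable def Blim (μ : ℝ) : ℝ :=
  Alim μ - (1 / 6) * ((1 / (1 - μ)) ^ 3 - μ * (1 / (1 - μ)) ^ 3)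

/- ### Geometric weighted limit -/

lemma geom_weight_tendsto {μ : ℝ} (h0 : 0 ≤ μ) (h1 : μ < 1) {u : ℕ → ℝ} {U : ℝ}
    (hu : Tendsto u atTop (nhds U)) :
    Tendsto (fun k => ∑ j ∈ Finset.range (k+1), μ^(k-j) * u j) atTop (nhds (U/(1-μ))) := by
  obtain ⟨M, hM⟩ : ∃ M, ∀ j, |u j| ≤ M := by
    obtain ⟨M, hM⟩ := (hu.abs.isBoundedUnder_le).bddAbove_range
    exact ⟨M, fun j => hM ⟨j, rfl⟩⟩
  have hM0 : 0 ≤ M := le_trans (abs_nonneg _) (hM 0)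
  set f : ℕ → ℕ → ℝ := fun k i => if i ≤ k then μ^i * u (k-i) else 0 with hf
  have key : ∀ k, ∑ j ∈ Finset.range (k+1), μ^(k-j) * u j = ∑' i, f k i := by
    intro k
    rw [tsum_eq_sum (s := Finset.range (k+1))
      (by intro i hi; simp only [Finset.mem_range, Nat.lt_succ_iff, not_le] at hi
          simp [hf, Nat.not_le.mpr hi])]
    rw [← Finset.sum_range_reflect (fun j => μ^(k-j) * u j) (k+1)]
    apply Finset.sum_congr rfl
    intro j hj
    simp only [Finset.mem_range, Nat.lt_succ_iff] at hj
    have h2 : k + 1 - 1 - j = k - j := by omega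
    have h3 : k - (k - j) = j := by omega
    simp only [hf, h2, h3, if_pos hj]
  have hg : Tendsto (fun k => ∑' i, f k i) atTop (nhds (∑' i : ℕ, μ^i * U)) := by
    apply tendsto_tsum_of_dominated_convergence
      (bound := fun i => M * μ^i) ((summable_geometric_of_lt_one h0 h1).mul_left M)
    · intro i
      have h3 : Tendsto (fun k => μ^i * u (k - i)) atTop (nhds (μ^i * U)) :=
        (hu.comp (tendsto_sub_atTop_nat i)).const_mul _
      apply h3.congr'
      filter_upwards [eventually_ge_atTop i] with k hk
      simp [hf, hk]
    · filter_upwards with k i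
      by_cases hik : i ≤ k
      · simp only [hf, if_pos hik]
        rw [Real.norm_eq_abs, abs_mul, abs_pow, abs_of_nonneg h0, mul_comm]
        exact mul_le_mul_of_nonneg_right (hM _) (pow_nonneg h0 i)
      · simp [hf, hik, mul_nonneg hM0 (pow_nonneg h0 i)]
  have hsum : ∑' i : ℕ, μ^i * U = U / (1-μ) := by
    rw [tsum_mul_right, tsum_geometric_of_lt_one h0 h1]; ring
  rw [← hsum]
  exact hg.congr fun k => (key k).symm

/- ### Limits of the scalar sequences -/

variable {μ : ℝ}

lemma auxa_tendsto (h0 : 0 < μ) (h1 : μ < 1) :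
    Tendsto (auxa μ) atTop (nhds (1 / (1 - μ))) := by
  have h := tendsto_pow_atTop_nhds_zero_of_lt_one h0.le h1
  have h2 : Tendsto (fun j : ℕ => (1 - μ ^ (j + 1)) / (1 - μ)) atTop
      (nhds ((1 - 0) / (1 - μ))) :=
    (tendsto_const_nhds.sub (h.comp (tendsto_add_atTop_nat 1))).div_const _
  rw [show auxa μ = fun j => (1 - μ ^ (j + 1)) / (1 - μ) from rfl]
  simpa using h2

lemma auxb_tendsto (h0 : 0 < μ) (h1 : μ < 1) :
    Tendsto (auxb μ) atTop (nhds (1 / (1 - μ))) := by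
  have h := tendsto_pow_atTop_nhds_zero_of_lt_one h0.le h1
  have h2 : Tendsto (fun j : ℕ => (1 - μ ^ j) / (1 - μ)) atTop
      (nhds ((1 - 0) / (1 - μ))) := (tendsto_const_nhds.sub h).div_const _
  rw [show auxb μ = fun j => (1 - μ ^ j) / (1 - μ) from rfl]
  simpa using h2

lemma auxS_tendsto (h0 : 0 < μ) (h1 : μ < 1) :
    Tendsto (auxS μ) atTop (nhds ((1 + μ) / (1 - μ))) := by
  have hp := tendsto_pow_atTop_nhds_zero_of_lt_one h0.le h1
  have hu : Tendsto (fun m : ℕ => (1 - μ ^ (m + 1)) ^ 2 + μ * (1 - μ ^ m) ^ 2) atTop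
      (nhds (1 + μ)) := by
    have h2 : Tendsto (fun m : ℕ => (1 - μ ^ (m + 1)) ^ 2 + μ * (1 - μ ^ m) ^ 2) atTop
        (nhds ((1 - (0:ℝ)) ^ 2 + μ * (1 - (0:ℝ)) ^ 2)) :=
      (((tendsto_const_nhds (x := (1:ℝ))).sub (hp.comp (tendsto_add_atTop_nat 1))).pow 2).add
        ((((tendsto_const_nhds (x := (1:ℝ))).sub hp).pow 2).const_mul μ)
    simpa using h2
  rw [show auxS μ = fun j => ∑ m ∈ Finset.range (j + 1), μ ^ (j - m) * ((1 - μ ^ (m + 1)) ^ 2 + μ * (1 - μ ^ m) ^ 2) from rfl]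
  simpa using geom_weight_tendsto h0.le h1 hu

lemma auxc_tendsto (h0 : 0 < μ) (h1 : μ < 1) :
    Tendsto (auxc μ) atTop (nhds (clim μ)) := by
  rw [show auxc μ = fun j => auxS μ j / (2 * (1 - μ) ^ 2) from rfl]
  simpa [clim] using (auxS_tendsto h0 h1).div_const (2 * (1 - μ) ^ 2)

lemma auxcp_tendsto (h0 : 0 < μ) (h1 : μ < 1) :
    Tendsto (auxcp μ) atTop (nhds (clim μ)) := by
  refine (tendsto_add_atTop_iff_nat 1).mp ?_
  exact auxc_tendsto h0 h1

lemma auxA_tendsto (h0 : 0 < μ) (h1 : μ < 1) :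
    Tendsto (auxA μ) atTop (nhds (Alim μ)) := by
  have h : Tendsto (fun j => (1/2 : ℝ) * (auxc μ j * auxa μ j + μ * (auxcp μ j * auxb μ j)))
      atTop (nhds ((1/2 : ℝ) * (clim μ * (1/(1-μ)) + μ * (clim μ * (1/(1-μ)))))) :=
    (((auxc_tendsto h0 h1).mul (auxa_tendsto h0 h1)).add
      (((auxcp_tendsto h0 h1).mul (auxb_tendsto h0 h1)).const_mul μ)).const_mul (1/2 : ℝ)
  exact h

lemma auxB_tendsto (h0 : 0 < μ) (h1 : μ < 1) :
    Tendsto (auxB μ) atTop (nhds (Blim μ)) := by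
  have h : Tendsto (fun j => auxA μ j - (1/6 : ℝ) * ((auxa μ j) ^ 3 - μ * (auxb μ j) ^ 3))
      atTop (nhds (Alim μ - (1/6 : ℝ) * ((1/(1-μ)) ^ 3 - μ * (1/(1-μ)) ^ 3))) :=
    (auxA_tendsto h0 h1).sub
      ((((auxa_tendsto h0 h1).pow 3).sub
        (((auxb_tendsto h0 h1).pow 3).const_mul μ)).const_mul (1/6 : ℝ))
  exact h

/- ### pd helper -/

lemma pd_const_mul {d : ℕ} {f : (Fin d → ℝ) → ℝ} {y : Fin d → ℝ}
    (hf : DifferentiableAt ℝ f y) (c : ℝ) (l : Fin d) :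
    pd (fun z => c * f z) l y = c * pd f l y := by
  unfold pd; rw [fderiv_const_mul hf c]; simp

/-- The second-order HBF counter term γ_k^{(1)} converges, as
k → ∞, to ((1+μ)²/(4(1-μ)⁵))[ω₁ + ((1+10μ+μ²)/(3(1+μ)²)) ω₂] at every point. -/
theorem stmt_8 (d : ℕ) (μ : ℝ) (hμ : μ ∈ Set.Ioo (0:ℝ) 1)
    (L : (Fin d → ℝ) → ℝ) (hL : ContDiff ℝ 3 L)
    (gradL : (Fin d → ℝ) → Fin d → ℝ) (hgrad : ∀ x i, gradL x i = pd L i x)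
    (G Gpred : ℕ → (Fin d → ℝ) → Fin d → ℝ)
    (hG : ∀ j x, G j x = ((1 - μ ^ (j + 1)) / (1 - μ)) • gradL x)
    -- Gpred j represents G_{j-1}; at j = 0 this is G_{-1} = 0
    (hGpred : ∀ j x, Gpred j x = ((1 - μ ^ j) / (1 - μ)) • gradL x)
    -- the first-order counter term γ_j^{(0)} and its shift γ_{j-1}^{(0)}
    (γ₀ γ₀pred : ℕ → (Fin d → ℝ) → Fin d → ℝ)
    (hγ₀ : ∀ j x i, γ₀ j x i =
      ((∑ l, pd (pd L l) i x * pd L l x) / (2 * (1 - μ) ^ 2)) *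
        ∑ m ∈ Finset.range (j + 1),
          μ ^ (j - m) * ((1 - μ ^ (m + 1)) ^ 2 + μ * (1 - μ ^ m) ^ 2))
    (hγ₀pred0 : ∀ x, γ₀pred 0 x = 0)
    (hγ₀predS : ∀ j x, γ₀pred (j + 1) x = γ₀ j x)
    (χ₁ : ℕ → (Fin d → ℝ) → Fin d → ℝ)
    (hχ₁ : ∀ j x, χ₁ j x =
      (1 / 2 : ℝ) • (lieOp (γ₀ j) (G j) x + μ • lieOp (γ₀pred j) (Gpred j) x
        + lieOp (G j) (γ₀ j) x + μ • lieOp (Gpred j) (γ₀pred j) x)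
      - (1 / 6 : ℝ) • (lieOp (G j) (lieOp (G j) (G j)) x
        - μ • lieOp (Gpred j) (lieOp (Gpred j) (Gpred j)) x))
    (γ₁ : ℕ → (Fin d → ℝ) → Fin d → ℝ)
    (hγ₁ : ∀ k x, γ₁ k x = ∑ j ∈ Finset.range (k + 1), μ ^ (k - j) • χ₁ j x)
    (ω₁ ω₂ : (Fin d → ℝ) → Fin d → ℝ)
    (hω₁ : ∀ x i, ω₁ x i = ∑ j, ∑ l, pd (pd L j) i x * pd (pd L l) j x * pd L l x)
    (hω₂ : ∀ x i, ω₂ x i =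
      ∑ l, pd L l x * pd (fun y => ∑ j, pd (pd L j) i y * pd L j y) l x) :
    ∀ x, Filter.Tendsto (fun k => γ₁ k x) Filter.atTop
      (nhds (((1 + μ) ^ 2 / (4 * (1 - μ) ^ 5)) •
        (ω₁ x + ((1 + 10 * μ + μ ^ 2) / (3 * (1 + μ) ^ 2)) • ω₂ x))) := by
  obtain ⟨hμ0, hμ1⟩ := hμ
  have hne : (1:ℝ) - μ ≠ 0 := ne_of_gt (by linarith)
  have hne' : (1:ℝ) + μ ≠ 0 := ne_of_gt (by linarith)
  intro x
  -- calculus facts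
  have hL' : ContDiff ℝ 2 (fderiv ℝ L) := hL.fderiv_right (by norm_num)
  have hpdL : ∀ i, ContDiff ℝ 2 (fun y => pd L i y) :=
    fun i => hL'.clm_apply contDiff_const
  have hpd2 : ∀ m i, ContDiff ℝ 1 (fun y => pd (pd L m) i y) :=
    fun m i => (((hpdL m).fderiv_right (by norm_num)).clm_apply contDiff_const)
  have hdiff_pdL : ∀ (i : Fin d) y, DifferentiableAt ℝ (pd L i) y :=
    fun i y => ((hpdL i).differentiable (by norm_num)) y
  have hdiff_h : ∀ (i : Fin d) y,
      DifferentiableAt ℝ (fun z => ∑ m, pd (pd L m) i z * pd L m z) y := by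
    intro i y
    exact DifferentiableAt.fun_sum fun m _ =>
      (((hpd2 m i).differentiable (by norm_num)) y).mul (hdiff_pdL m y)
  have hsymm : ∀ (y : Fin d → ℝ) (i l : Fin d), pd (pd L i) l y = pd (pd L l) i y := by
    intro y i l
    have hs : IsSymmSndFDerivAt ℝ L y := (hL.contDiffAt).isSymmSndFDerivAt (by norm_num)
    have hd : DifferentiableAt ℝ (fderiv ℝ L) y := hL'.differentiable (by norm_num) y
    have e1 : ∀ (v w : Fin d → ℝ), fderiv ℝ (fun z => fderiv ℝ L z v) y w
        = fderiv ℝ (fderiv ℝ L) y w v := by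
      intro v w
      rw [fderiv_clm_apply hd (differentiableAt_const v)]
      simp
    show fderiv ℝ (fun z => fderiv ℝ L z (Pi.single i 1)) y (Pi.single l 1)
      = fderiv ℝ (fun z => fderiv ℝ L z (Pi.single l 1)) y (Pi.single i 1)
    rw [e1, e1, hs]
  -- pointwise descriptions of the data
  have hKG : ∀ (j : ℕ) y (i : Fin d), G j y i = auxa μ j * pd L i y := by
    intro j y i
    rw [hG j y, Pi.smul_apply, smul_eq_mul, hgrad]
    rfl
  have hKGp : ∀ (j : ℕ) y (i : Fin d), Gpred j y i = auxb μ j * pd L i y := by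
    intro j y i
    rw [hGpred j y, Pi.smul_apply, smul_eq_mul, hgrad]
    rfl
  have hFγ : ∀ (j : ℕ) y (l : Fin d),
      γ₀ j y l = auxc μ j * ∑ m, pd (pd L m) l y * pd L m y := by
    intro j y l
    rw [hγ₀ j y l]
    unfold auxc auxS
    ring
  have hFγp : ∀ (j : ℕ) y (l : Fin d),
      γ₀pred j y l = auxcp μ j * ∑ m, pd (pd L m) l y * pd L m y := by
    intro j y l
    cases j with
    | zero =>
      have := congrFun (hγ₀pred0 y) l
      rw [this]
      simp [auxcp]
    | succ n =>
      rw [hγ₀predS n y]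
      exact hFγ n y l
  -- the three lie-operator computations
  have lieA : ∀ (α β : ℝ) (F K : (Fin d → ℝ) → Fin d → ℝ),
      (∀ y l, F y l = α * ∑ m, pd (pd L m) l y * pd L m y) →
      (∀ y i, K y i = β * pd L i y) → ∀ i,
      lieOp F K x i = α * β * ω₁ x i := by
    intro α β F K hF hK i
    unfold lieOp
    have step : ∀ l : Fin d, pd (fun y => K y i) l x = β * pd (pd L l) i x := by
      intro l
      have hfun : (fun y => K y i) = fun y => β * pd L i y := funext fun y => hK y i
      rw [hfun, pd_const_mul (hdiff_pdL i x) β l, hsymm x i l]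
    rw [hω₁ x i, Finset.mul_sum]
    apply Finset.sum_congr rfl
    intro l _
    rw [hF x l, step l]
    simp only [Finset.mul_sum, Finset.sum_mul]
    exact Finset.sum_congr rfl fun m _ => by ring
  have lieB : ∀ (α β : ℝ) (F K : (Fin d → ℝ) → Fin d → ℝ),
      (∀ y i', F y i' = α * ∑ m, pd (pd L m) i' y * pd L m y) →
      (∀ y l, K y l = β * pd L l y) → ∀ i,
      lieOp K F x i = α * β * ω₂ x i := by
    intro α β F K hF hK i
    unfold lieOp
    rw [hω₂ x i, Finset.mul_sum]
    apply Finset.sum_congr rfl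
    intro l _
    have hfun : (fun y => F y i) = fun y => α * ∑ m, pd (pd L m) i y * pd L m y :=
      funext fun y => hF y i
    have hpd := pd_const_mul (f := fun z => ∑ m, pd (pd L m) i z * pd L m z)
      (hdiff_h i x) α l
    rw [hK x l, hfun, hpd]
    ring
  have lieC : ∀ (β : ℝ) (K : (Fin d → ℝ) → Fin d → ℝ),
      (∀ y i', K y i' = β * pd L i' y) → ∀ i,
      lieOp K (lieOp K K) x i = β ^ 3 * ω₂ x i := by
    intro β K hK i
    have hin : ∀ y (i' : Fin d),
        lieOp K K y i' = β ^ 2 * ∑ m, pd (pd L m) i' y * pd L m y := by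
      intro y i'
      unfold lieOp
      rw [Finset.mul_sum]
      apply Finset.sum_congr rfl
      intro l _
      have hfun : (fun z => K z i') = fun z => β * pd L i' z := funext fun z => hK z i'
      rw [hK y l, hfun, pd_const_mul (hdiff_pdL i' y) β l, hsymm y i' l]
      ring
    have h := lieB (β ^ 2) β (lieOp K K) K hin hK i
    rw [h]; ring
  -- componentwise formula for χ₁
  have hχ : ∀ (j : ℕ) (i : Fin d),
      χ₁ j x i = auxA μ j * ω₁ x i + auxB μ j * ω₂ x i := by
    intro j i
    have e1 := lieA (auxc μ j) (auxa μ j) (γ₀ j) (G j) (hFγ j) (hKG j) i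
    have e2 := lieA (auxcp μ j) (auxb μ j) (γ₀pred j) (Gpred j) (hFγp j) (hKGp j) i
    have e3 := lieB (auxc μ j) (auxa μ j) (γ₀ j) (G j) (hFγ j) (hKG j) i
    have e4 := lieB (auxcp μ j) (auxb μ j) (γ₀pred j) (Gpred j) (hFγp j) (hKGp j) i
    have e5 := lieC (auxa μ j) (G j) (hKG j) i
    have e6 := lieC (auxb μ j) (Gpred j) (hKGp j) i
    have h7 := congrFun (hχ₁ j x) i
    simp only [Pi.smul_apply, Pi.add_apply, Pi.sub_apply, smul_eq_mul] at h7
    rw [h7, e1, e2, e3, e4, e5, e6]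
    unfold auxB auxA
    ring
  -- assemble, componentwise
  rw [tendsto_pi_nhds]
  intro i
  have comp : ∀ k, γ₁ k x i = ∑ j ∈ Finset.range (k+1),
      μ ^ (k - j) * (auxA μ j * ω₁ x i + auxB μ j * ω₂ x i) := by
    intro k
    rw [show γ₁ k x i = (∑ j ∈ Finset.range (k + 1), μ ^ (k - j) • χ₁ j x) i from
      congrFun (hγ₁ k x) i, Finset.sum_apply]
    exact Finset.sum_congr rfl fun j _ => by rw [Pi.smul_apply, smul_eq_mul, hχ j i]
  have hu : Tendsto (fun j => auxA μ j * ω₁ x i + auxB μ j * ω₂ x i) atTop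
      (nhds (Alim μ * ω₁ x i + Blim μ * ω₂ x i)) :=
    (((auxA_tendsto hμ0 hμ1).mul_const _)).add ((auxB_tendsto hμ0 hμ1).mul_const _)
  have hmain := geom_weight_tendsto hμ0.le hμ1 hu
  have heq : (Alim μ * ω₁ x i + Blim μ * ω₂ x i) / (1 - μ)
      = (((1 + μ) ^ 2 / (4 * (1 - μ) ^ 5)) •
        (ω₁ x + ((1 + 10 * μ + μ ^ 2) / (3 * (1 + μ) ^ 2)) • ω₂ x)) i := by
    simp only [Pi.smul_apply, Pi.add_apply, smul_eq_mul]
    unfold Blim Alim clim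
    field_simp
    ring
  rw [← heq]
  exact hmain.congr fun k => (comp k).symm
end

section
/- Suppose w_±(t) are differentiable curves in ℝ^d satisfying the HBF dynamics of the diagonal linear network, with w_{+,j}(t) ≠ 0 and w_{-,j}(t) ≠ 0 for all t ≥ 0 and all j, and with continuous correction terms γ^{w_±}. Let κ_j(t) = w_{+,j}(t) w_{-,j}(t) and ε_j(t) = ∫_0^t (γ^{w_+}_j(s)/w_{+,j}(s) + γ^{w_-}_j(s)/w_{-,j}(s)) ds. Then for every j and every t ≥ 0, κ_j(t) = κ_j(0) exp(−η ε_j(t)). -/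
/-- Along the HBF dynamics of the diagonal linear network with
nonvanishing coordinates, κ_j(t) = w_{+,j}(t) w_{-,j}(t) satisfies
κ_j(t) = κ_j(0) exp(-η ε_j(t)). -/
theorem stmt_12 (n d : ℕ) (μ η : ℝ) (hμ : μ ∈ Set.Ioo (0:ℝ) 1) (hη : 0 < η)
    (X : Fin n → Fin d → ℝ) (y : Fin n → ℝ)
    (wp wm : ℝ → Fin d → ℝ)
    (γp γm : ℝ → Fin d → ℝ)
    (hγp : ∀ j, Continuous fun t => γp t j)
    (hγm : ∀ j, Continuous fun t => γm t j)
    (gradw : (Fin d → ℝ) → Fin d → ℝ)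
    (hgw : ∀ v j, gradw v j = (1 / (n : ℝ)) * ∑ i, X i j * ((∑ l, X i l * v l) - y i))
    (w : ℝ → Fin d → ℝ) (hwdef : ∀ t j, w t j = wp t j ^ 2 - wm t j ^ 2)
    (hdynp : ∀ t : ℝ, 0 ≤ t → ∀ j, HasDerivAt (fun s => wp s j)
      (-(2 * wp t j * gradw (w t) j) / (1 - μ) - η * γp t j) t)
    (hdynm : ∀ t : ℝ, 0 ≤ t → ∀ j, HasDerivAt (fun s => wm s j)
      (-(-2 * wm t j * gradw (w t) j) / (1 - μ) - η * γm t j) t)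
    (hne_p : ∀ t : ℝ, 0 ≤ t → ∀ j, wp t j ≠ 0)
    (hne_m : ∀ t : ℝ, 0 ≤ t → ∀ j, wm t j ≠ 0)
    (κ : Fin d → ℝ → ℝ) (hκ : ∀ j t, κ j t = wp t j * wm t j)
    (ε : Fin d → ℝ → ℝ)
    (hε : ∀ j t, ε j t = ∫ s in (0:ℝ)..t, (γp s j / wp s j + γm s j / wm s j)) :
    ∀ j, ∀ t : ℝ, 0 ≤ t → κ j t = κ j 0 * Real.exp (-η * ε j t) := by
  intro j t₀ ht₀
  set g : ℝ → ℝ := fun s => γp s j / wp s j + γm s j / wm s j with hg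
  -- continuity of g on Ici 0
  have hwpc : ∀ x ∈ Set.Ici (0:ℝ), ContinuousAt (fun s => wp s j) x := fun x hx =>
    (hdynp x hx j).continuousAt
  have hwmc : ∀ x ∈ Set.Ici (0:ℝ), ContinuousAt (fun s => wm s j) x := fun x hx =>
    (hdynm x hx j).continuousAt
  have hgcont : ContinuousOn g (Set.Ici 0) := by
    intro x hx
    apply ContinuousAt.continuousWithinAt
    exact ((hγp j).continuousAt.div (hwpc x hx) (hne_p x hx j)).add
      ((hγm j).continuousAt.div (hwmc x hx) (hne_m x hx j))
  -- F is constant on [0, t₀]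
  set F : ℝ → ℝ := fun s => κ j s * Real.exp (η * ε j s) with hF
  have hεeq : ∀ s, ε j s = ∫ u in (0:ℝ)..s, g u := fun s => hε j s
  have hεderiv : ∀ x ∈ Set.Ico (0:ℝ) t₀, HasDerivWithinAt (ε j) (g x) (Set.Ici x) x := by
    intro x hx
    have hxle : Set.Ici x ⊆ Set.Ici (0:ℝ) := Set.Ici_subset_Ici.2 hx.1
    have hint : IntervalIntegrable g MeasureTheory.volume 0 x := by
      apply ContinuousOn.intervalIntegrable
      apply hgcont.mono
      rw [Set.uIcc_of_le hx.1]
      exact fun u hu => hu.1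
    have hmeas : StronglyMeasurableAtFilter g (nhdsWithin x (Set.Ioi x))
        MeasureTheory.volume :=
      (hgcont.mono (Set.Ioi_subset_Ici_self.trans hxle)).stronglyMeasurableAtFilter_nhdsWithin
        measurableSet_Ioi x
    have hcw : ContinuousWithinAt g (Set.Ioi x) x :=
      ((hgcont x hx.1).mono hxle).mono Set.Ioi_subset_Ici_self
    have := intervalIntegral.integral_hasDerivWithinAt_right (s := Set.Ici x) (t := Set.Ioi x) hint hmeas hcw
    have heq : (fun s => ∫ u in (0:ℝ)..s, g u) = ε j := by
      funext s; rw [hεeq s]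
    rwa [heq] at this
  have hκderiv : ∀ x ∈ Set.Ico (0:ℝ) t₀,
      HasDerivAt (κ j) (-η * g x * κ j x) x := by
    intro x hx
    have h1 := (hdynp x hx.1 j).mul (hdynm x hx.1 j)
    have hκfun : κ j = fun s => wp s j * wm s j := by funext s; exact hκ j s
    rw [hκfun]
    refine HasDerivAt.congr_deriv h1 ?_
    have hp := hne_p x hx.1 j
    have hm := hne_m x hx.1 j
    simp only [hg]
    field_simp [hg]
    ring
  have hFderiv : ∀ x ∈ Set.Ico (0:ℝ) t₀, HasDerivWithinAt F 0 (Set.Ici x) x := by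
    intro x hx
    have h1 : HasDerivWithinAt (fun s => Real.exp (η * ε j s))
        (η * g x * Real.exp (η * ε j x)) (Set.Ici x) x := by
      have := (((hεderiv x hx).const_mul η).exp)
      convert this using 1
      ring
    have h2 := ((hκderiv x hx).hasDerivWithinAt (s := Set.Ici x)).mul h1
    refine HasDerivWithinAt.congr_deriv h2 ?_
    ring
  have hεcont : ContinuousOn (ε j) (Set.Icc 0 t₀) := by
    have hint : IntervalIntegrable g MeasureTheory.volume 0 t₀ := by
      apply ContinuousOn.intervalIntegrable
      apply hgcont.mono
      rw [Set.uIcc_of_le ht₀]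
      exact fun u hu => hu.1
    have := intervalIntegral.continuousOn_primitive_interval' hint
      (Set.left_mem_uIcc (a := (0:ℝ)) (b := t₀))
    rw [Set.uIcc_of_le ht₀] at this
    have heq : (fun s => ∫ u in (0:ℝ)..s, g u) = ε j := by
      funext s; rw [hεeq s]
    rwa [heq] at this
  have hFcont : ContinuousOn F (Set.Icc 0 t₀) := by
    intro x hx
    apply ContinuousWithinAt.mul
    · have : ContinuousAt (κ j) x := by
        have hκfun : κ j = fun s => wp s j * wm s j := by funext s; exact hκ j s
        rw [hκfun]
        exact (hwpc x hx.1).mul (hwmc x hx.1)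
      exact this.continuousWithinAt
    · exact (Real.continuous_exp.continuousAt).comp_continuousWithinAt
        ((hεcont x hx).const_smul η)
  have hconst := constant_of_has_deriv_right_zero hFcont hFderiv t₀ ⟨ht₀, le_refl t₀⟩
  have hε0 : ε j 0 = 0 := by rw [hεeq 0, intervalIntegral.integral_same]
  have hF0 : F 0 = κ j 0 := by simp [hF, hε0]
  have : κ j t₀ * Real.exp (η * ε j t₀) = κ j 0 := by rw [← hF0]; exact hconst
  have hexp : Real.exp (η * ε j t₀) ≠ 0 := Real.exp_ne_zero _
  rw [neg_mul, Real.exp_neg]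
  field_simp
  linarith [this]
end

section
/- Suppose w_±(t) are differentiable curves in ℝ^d satisfying the HBF dynamics of the diagonal linear network, with w_{+,j}(0) = w_{-,j}(0) ≠ 0 (so w(0) = 0), w_{±,j}(t) ≠ 0 for all t, j. Suppose the predictor w(t) converges to an interpolating solution w(∞) with X w(∞) = y, the residual r(t) is integrable on [0,∞), and the integrals defining ε_j(t) and φ_j(t) converge as t → ∞. Define κ_j(t) = w_{+,j}(0) w_{-,j}(0) exp(−η ε_j(t)) with ε_j(t) = ∫_0^t (γ^{w_+}_j/w_{+,j} + γ^{w_-}_j/w_{-,j}) ds, φ_j(t) = (η/4) ∫_0^t (γ^{w_+}_j/w_{+,j} − γ^{w_-}_j/w_{-,j}) ds, Λ^GF_j(w; κ) = (1/4)[w_j arcsinh(w_j/(2κ_j)) − √(4κ_j² + w_j²) + 2κ_j], Λ_j(w,∞;κ(∞)) = Λ^GF_j(w;κ(∞)) + w_j φ_j(∞), and Λ(w;κ) = Σ_{j=1}^d Λ_j(w,∞;κ(∞)). Then w(∞) is a minimizer of Λ(w;κ) over the affine set {w ∈ ℝ^d : Xw = y}. -/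
open Real intervalIntegral MeasureTheory Filter Set

lemma stmt15_aux_deriv {κ : ℝ} (hκ : 0 < κ) (x : ℝ) :
    HasDerivAt (fun z => (1/4) * (z * Real.arsinh (z / (2*κ)) - Real.sqrt (4*κ^2 + z^2) + 2*κ))
      ((1/4) * Real.arsinh (x / (2*κ))) x := by
  have h2κ : (0:ℝ) < 2*κ := by linarith
  have hpos : (0:ℝ) < 4*κ^2 + x^2 := by positivity
  have hsq : Real.sqrt (4*κ^2 + x^2) ≠ 0 := by positivity
  have hinner : HasDerivAt (fun z : ℝ => z / (2*κ)) (1/(2*κ)) x := by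
    simpa using (hasDerivAt_id x).div_const (2*κ)
  have harc : HasDerivAt (fun z : ℝ => Real.arsinh (z / (2*κ)))
      ((Real.sqrt (1 + (x/(2*κ))^2))⁻¹ * (1/(2*κ))) x :=
    (Real.hasDerivAt_arsinh _).comp x hinner
  have hprod : HasDerivAt (fun z : ℝ => z * Real.arsinh (z / (2*κ)))
      (1 * Real.arsinh (x/(2*κ)) + x * ((Real.sqrt (1 + (x/(2*κ))^2))⁻¹ * (1/(2*κ)))) x :=
    (hasDerivAt_id x).mul harc
  have hq : HasDerivAt (fun z : ℝ => 4*κ^2 + z^2) (2*x) x := by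
    simpa using (hasDerivAt_pow 2 x).const_add (4*κ^2)
  have hsqrt : HasDerivAt (fun z : ℝ => Real.sqrt (4*κ^2 + z^2))
      (1 / (2 * Real.sqrt (4*κ^2 + x^2)) * (2*x)) x := by
    simpa [Function.comp_def] using (Real.hasDerivAt_sqrt (ne_of_gt hpos)).comp x hq
  have hval : Real.sqrt (1 + (x/(2*κ))^2) = Real.sqrt (4*κ^2 + x^2) / (2*κ) := by
    rw [show 1 + (x/(2*κ))^2 = (4*κ^2 + x^2) / ((2*κ)^2) by field_simp; ring,
      Real.sqrt_div hpos.le, Real.sqrt_sq h2κ.le]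
  have := ((hprod.sub hsqrt).add_const (2*κ)).const_mul (1/4)
  refine this.congr_deriv ?_
  rw [hval]
  have h1 : Real.sqrt (4*κ^2+x^2) / (2*κ) ≠ 0 := by positivity
  field_simp
  ring

lemma stmt15_aux_convex {κ : ℝ} (hκ : 0 < κ) (φ a b : ℝ) :
    ((1/4) * Real.arsinh (a/(2*κ)) + φ) * (b - a) ≤
      (((1/4)*(b * Real.arsinh (b/(2*κ)) - Real.sqrt (4*κ^2+b^2) + 2*κ) + b*φ)
      - ((1/4)*(a * Real.arsinh (a/(2*κ)) - Real.sqrt (4*κ^2+a^2) + 2*κ) + a*φ)) := by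
  set c : ℝ := (1/4) * Real.arsinh (a/(2*κ)) + φ with hc
  set F : ℝ → ℝ := fun z =>
    ((1/4)*(z * Real.arsinh (z/(2*κ)) - Real.sqrt (4*κ^2+z^2) + 2*κ) + z*φ) - c * z with hF
  set F' : ℝ → ℝ := fun z => (1/4) * Real.arsinh (z/(2*κ)) - (1/4) * Real.arsinh (a/(2*κ)) with hF'
  have hFd : ∀ z, HasDerivAt F (F' z) z := by
    intro z
    have h1 := ((stmt15_aux_deriv hκ z).add ((hasDerivAt_id z).const_mul φ)).sub
      ((hasDerivAt_id z).const_mul c)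
    refine HasDerivAt.congr_deriv (h1.congr_of_eventuallyEq (Filter.Eventually.of_forall fun s => ?_)) ?_
    · simp [F]; ring
    · simp only [F', hc]; ring
  have h2κ : (0:ℝ) < 2*κ := by linarith
  have key : F a ≤ F b := by
    rcases le_total a b with hab | hab
    · have hmono : MonotoneOn F (Set.Icc a b) := by
        apply monotoneOn_of_hasDerivWithinAt_nonneg (convex_Icc a b)
          (fun z _ => (hFd z).continuousAt.continuousWithinAt)
          (fun z _ => (hFd z).hasDerivWithinAt)
        intro z hz
        rw [interior_Icc] at hz
        have : a / (2*κ) ≤ z / (2*κ) := (div_le_div_iff_of_pos_right h2κ).mpr hz.1.le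
        simp only [F']
        have := Real.arsinh_le_arsinh.mpr this
        linarith
      exact hmono (Set.left_mem_Icc.mpr hab) (Set.right_mem_Icc.mpr hab) hab
    · have hanti : AntitoneOn F (Set.Icc b a) := by
        apply antitoneOn_of_hasDerivWithinAt_nonpos (convex_Icc b a)
          (fun z _ => (hFd z).continuousAt.continuousWithinAt)
          (fun z _ => (hFd z).hasDerivWithinAt)
        intro z hz
        rw [interior_Icc] at hz
        have : z / (2*κ) ≤ a / (2*κ) := (div_le_div_iff_of_pos_right h2κ).mpr hz.2.le
        simp only [F']
        have := Real.arsinh_le_arsinh.mpr this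
        linarith
      exact hanti (Set.left_mem_Icc.mpr hab) (Set.right_mem_Icc.mpr hab) hab
  have : F b - F a = (((1/4)*(b * Real.arsinh (b/(2*κ)) - Real.sqrt (4*κ^2+b^2) + 2*κ) + b*φ)
      - ((1/4)*(a * Real.arsinh (a/(2*κ)) - Real.sqrt (4*κ^2+a^2) + 2*κ) + a*φ)) - c * (b - a) := by
    simp [F]; ring
  have key2 : 0 ≤ F b - F a := by linarith
  rw [this] at key2
  linarith

lemma stmt15_ode_exp {u ψ : ℝ → ℝ} (hψ : Continuous ψ)
    (hu : ∀ t : ℝ, 0 ≤ t → HasDerivAt u (-(ψ t) * u t) t) (t : ℝ) (ht : 0 ≤ t) :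
    u t = u 0 * Real.exp (-∫ s in (0:ℝ)..t, ψ s) := by
  set Ψ : ℝ → ℝ := fun x => ∫ s in (0:ℝ)..x, ψ s with hΨ
  have hΨd : ∀ x, HasDerivAt Ψ (ψ x) x := fun x => (hψ.integral_hasStrictDerivAt 0 x).hasDerivAt
  have hE : ∀ x, 0 ≤ x → HasDerivAt (fun s => u s * Real.exp (Ψ s)) 0 x := by
    intro x hx
    have h1 := (hu x hx).mul ((hΨd x).exp)
    refine h1.congr_deriv ?_
    ring
  have hconst := constant_of_has_deriv_right_zero
    (f := fun s => u s * Real.exp (Ψ s)) (a := 0) (b := t)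
    (fun x hx => ((hE x hx.1).continuousAt).continuousWithinAt)
    (fun x hx => ((hE x hx.1).hasDerivWithinAt))
  have h0 : u t * Real.exp (Ψ t) = u 0 := by
    have := hconst t ⟨ht, le_rfl⟩
    simpa [Ψ, intervalIntegral.integral_same] using this
  rw [Real.exp_neg, ← div_eq_mul_inv, eq_div_iff (Real.exp_ne_zero _)]
  exact h0

/-- Implicit bias of HBF for diagonal linear networks: the limit
w(∞) of the predictor minimizes Λ(w;κ) = Σ_j [Λ^GF_j(w;κ_j(∞)) + w_j φ_j(∞)]
over the affine set {w : Xw = y}. -/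
theorem stmt_15 (n d : ℕ) (μ η : ℝ) (hμ : μ ∈ Set.Ioo (0:ℝ) 1) (hη : 0 < η)
    (X : Fin n → Fin d → ℝ) (y : Fin n → ℝ)
    (wp wm : ℝ → Fin d → ℝ)
    (γp γm : ℝ → Fin d → ℝ)
    (hγp : ∀ j, Continuous fun t => γp t j)
    (hγm : ∀ j, Continuous fun t => γm t j)
    (gradw : (Fin d → ℝ) → Fin d → ℝ)
    (hgw : ∀ v j, gradw v j = (1 / (n : ℝ)) * ∑ i, X i j * ((∑ l, X i l * v l) - y i))
    (w : ℝ → Fin d → ℝ) (hwdef : ∀ t j, w t j = wp t j ^ 2 - wm t j ^ 2)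
    (hdynp : ∀ t : ℝ, 0 ≤ t → ∀ j, HasDerivAt (fun s => wp s j)
      (-(2 * wp t j * gradw (w t) j) / (1 - μ) - η * γp t j) t)
    (hdynm : ∀ t : ℝ, 0 ≤ t → ∀ j, HasDerivAt (fun s => wm s j)
      (-(-2 * wm t j * gradw (w t) j) / (1 - μ) - η * γm t j) t)
    (hinit : ∀ j, wp 0 j = wm 0 j) (hinit0 : ∀ j, wp 0 j ≠ 0)
    (hne_p : ∀ t : ℝ, 0 ≤ t → ∀ j, wp t j ≠ 0)
    (hne_m : ∀ t : ℝ, 0 ≤ t → ∀ j, wm t j ≠ 0)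
    -- the predictor converges to an interpolating solution
    (winf : Fin d → ℝ)
    (hconv : ∀ j, Filter.Tendsto (fun t => w t j) Filter.atTop (nhds (winf j)))
    (hinterp : ∀ i, ∑ l, X i l * winf l = y i)
    -- the residual is integrable on [0,∞)
    (hres : ∀ i, MeasureTheory.IntegrableOn
      (fun t => (∑ l, X i l * w t l) - y i) (Set.Ici (0:ℝ)))
    -- the integrals defining ε_j and φ_j converge as t → ∞
    (εinf φinf : Fin d → ℝ)
    (hεinf : ∀ j, Filter.Tendsto
      (fun t => ∫ s in (0:ℝ)..t, (γp s j / wp s j + γm s j / wm s j))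
      Filter.atTop (nhds (εinf j)))
    (hφinf : ∀ j, Filter.Tendsto
      (fun t => (η / 4) * ∫ s in (0:ℝ)..t, (γp s j / wp s j - γm s j / wm s j))
      Filter.atTop (nhds (φinf j)))
    (κinf : Fin d → ℝ)
    (hκinf : ∀ j, κinf j = wp 0 j * wm 0 j * Real.exp (-η * εinf j))
    (Λ : (Fin d → ℝ) → ℝ)
    (hΛ : ∀ u, Λ u = ∑ j,
      ((1 / 4) * (u j * Real.arsinh (u j / (2 * κinf j))
        - Real.sqrt (4 * κinf j ^ 2 + u j ^ 2) + 2 * κinf j) + u j * φinf j)) :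
    ∀ u : Fin d → ℝ, (∀ i, ∑ l, X i l * u l = y i) → Λ winf ≤ Λ u := by
  intro u hu
  obtain ⟨hμ0, hμ1⟩ := hμ
  have h1μ : (0:ℝ) < 1 - μ := by linarith
  have hmax : ∀ s : ℝ, (0:ℝ) ≤ max s 0 := fun s => le_max_right s 0
  -- continuity of trajectories (extended by max to all of ℝ)
  have hwpC : ∀ j, Continuous fun s => wp (max s 0) j := by
    intro j
    have hcon : ContinuousOn (fun s => wp s j) (Set.Ici 0) :=
      fun x hx => ((hdynp x hx j).continuousAt).continuousWithinAt
    exact hcon.comp_continuous (continuous_id.max continuous_const) hmax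
  have hwmC : ∀ j, Continuous fun s => wm (max s 0) j := by
    intro j
    have hcon : ContinuousOn (fun s => wm s j) (Set.Ici 0) :=
      fun x hx => ((hdynm x hx j).continuousAt).continuousWithinAt
    exact hcon.comp_continuous (continuous_id.max continuous_const) hmax
  have hwC : ∀ l, Continuous fun s => w (max s 0) l := by
    intro l
    have : (fun s => w (max s 0) l) = fun s => wp (max s 0) l ^ 2 - wm (max s 0) l ^ 2 :=
      funext fun s => hwdef _ _
    rw [this]; exact ((hwpC l).pow 2).sub ((hwmC l).pow 2)
  -- extended residual, gradient, correction ratios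
  set r' : Fin n → ℝ → ℝ := fun i s => (∑ l, X i l * w (max s 0) l) - y i with hr'
  have hr'C : ∀ i, Continuous (r' i) := fun i =>
    (continuous_finset_sum _ fun l _ => continuous_const.mul (hwC l)).sub continuous_const
  set g' : Fin d → ℝ → ℝ := fun j s => (1/(n:ℝ)) * ∑ i, X i j * r' i s with hg'
  have hg'C : ∀ j, Continuous (g' j) := fun j =>
    continuous_const.mul (continuous_finset_sum _ fun i _ => continuous_const.mul (hr'C i))
  have hg'eq : ∀ j (t : ℝ), 0 ≤ t → g' j t = gradw (w t) j := by
    intro j t ht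
    rw [hgw]
    simp only [hg', hr', max_eq_left ht]
  set p' : Fin d → ℝ → ℝ := fun j s => γp s j / wp (max s 0) j with hp'
  set m' : Fin d → ℝ → ℝ := fun j s => γm s j / wm (max s 0) j with hm'
  have hp'C : ∀ j, Continuous (p' j) := fun j =>
    (hγp j).div (hwpC j) fun s => hne_p _ (hmax s) j
  have hm'C : ∀ j, Continuous (m' j) := fun j =>
    (hγm j).div (hwmC j) fun s => hne_m _ (hmax s) j
  -- closed-form solutions of the dynamics
  have hwp_eq : ∀ j (t : ℝ), 0 ≤ t → wp t j
      = wp 0 j * Real.exp (-∫ s in (0:ℝ)..t, (2/(1-μ) * g' j s + η * p' j s)) := by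
    intro j t ht
    refine stmt15_ode_exp (u := fun s => wp s j)
      (ψ := fun s => 2/(1-μ) * g' j s + η * p' j s)
      ((continuous_const.mul (hg'C j)).add (continuous_const.mul (hp'C j))) ?_ t ht
    intro x hx
    have h := hdynp x hx j
    convert h using 1
    rw [← hg'eq j x hx]
    simp only [hp', max_eq_left hx]
    have hne := hne_p x hx j
    field_simp
    ring
  have hwm_eq : ∀ j (t : ℝ), 0 ≤ t → wm t j
      = wm 0 j * Real.exp (-∫ s in (0:ℝ)..t, (-2/(1-μ) * g' j s + η * m' j s)) := by
    intro j t ht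
    refine stmt15_ode_exp (u := fun s => wm s j)
      (ψ := fun s => -2/(1-μ) * g' j s + η * m' j s)
      ((continuous_const.mul (hg'C j)).add (continuous_const.mul (hm'C j))) ?_ t ht
    intro x hx
    have h := hdynm x hx j
    convert h using 1
    rw [← hg'eq j x hx]
    simp only [hm', max_eq_left hx]
    have hne := hne_m x hx j
    field_simp
    ring
  -- limits of the interval integrals of the residuals
  obtain ⟨R, hRlim⟩ : ∃ R : Fin n → ℝ, ∀ i,
      Filter.Tendsto (fun t => ∫ s in (0:ℝ)..t, r' i s) Filter.atTop (nhds (R i)) := by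
    refine ⟨fun i => ∫ s in Set.Ioi (0:ℝ), r' i s, fun i => ?_⟩
    refine MeasureTheory.intervalIntegral_tendsto_integral_Ioi 0 ?_ tendsto_id
    refine ((hres i).mono_set Set.Ioi_subset_Ici_self).congr_fun ?_ measurableSet_Ioi
    intro s hs
    simp only [hr', max_eq_left (le_of_lt (Set.mem_Ioi.mp hs))]
  have hκpos : ∀ j, 0 < κinf j := by
    intro j
    rw [hκinf j, ← hinit j]
    exact mul_pos (by rw [← sq]; exact pow_two_pos_of_ne_zero (hinit0 j)) (Real.exp_pos _)
  -- the key identity: the gradient of Λ at winf lies in the row space of X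
  have key1 : ∀ j, (1/4) * Real.arsinh (winf j / (2 * κinf j)) + φinf j
      = -(1/(1-μ)) * ((1/(n:ℝ)) * ∑ i, X i j * R i) := by
    intro j
    -- limits of the correction integrals
    have hPM : Filter.Tendsto (fun t => (∫ s in (0:ℝ)..t, p' j s) + ∫ s in (0:ℝ)..t, m' j s)
        Filter.atTop (nhds (εinf j)) := by
      refine Filter.Tendsto.congr' ?_ (hεinf j)
      filter_upwards [Filter.eventually_ge_atTop (0:ℝ)] with t ht
      rw [← intervalIntegral.integral_add ((hp'C j).intervalIntegrable _ _)
        ((hm'C j).intervalIntegrable _ _)]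
      apply intervalIntegral.integral_congr
      intro s hs
      rw [Set.uIcc_of_le ht] at hs
      simp only [hp', hm', max_eq_left hs.1]
    have hPMd : Filter.Tendsto (fun t => (∫ s in (0:ℝ)..t, p' j s) - ∫ s in (0:ℝ)..t, m' j s)
        Filter.atTop (nhds ((4/η) * φinf j)) := by
      have h := (hφinf j).const_mul (4/η)
      refine Filter.Tendsto.congr' ?_ h
      filter_upwards [Filter.eventually_ge_atTop (0:ℝ)] with t ht
      have h2 : (4/η) * ((η/4) * ∫ s in (0:ℝ)..t, (γp s j / wp s j - γm s j / wm s j))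
          = ∫ s in (0:ℝ)..t, (γp s j / wp s j - γm s j / wm s j) := by
        field_simp
      rw [h2, ← intervalIntegral.integral_sub ((hp'C j).intervalIntegrable _ _)
        ((hm'C j).intervalIntegrable _ _)]
      apply intervalIntegral.integral_congr
      intro s hs
      rw [Set.uIcc_of_le ht] at hs
      simp only [hp', hm', max_eq_left hs.1]
    have hPlim : Filter.Tendsto (fun t => ∫ s in (0:ℝ)..t, p' j s) Filter.atTop
        (nhds ((εinf j + (4/η) * φinf j)/2)) :=
      Filter.Tendsto.congr (fun t => by ring) ((hPM.add hPMd).div_const 2)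
    have hMlim : Filter.Tendsto (fun t => ∫ s in (0:ℝ)..t, m' j s) Filter.atTop
        (nhds ((εinf j - (4/η) * φinf j)/2)) :=
      Filter.Tendsto.congr (fun t => by ring) ((hPM.sub hPMd).div_const 2)
    have hGlim : Filter.Tendsto (fun t => ∫ s in (0:ℝ)..t, g' j s) Filter.atTop
        (nhds ((1/(n:ℝ)) * ∑ i, X i j * R i)) := by
      have heq : ∀ t : ℝ, (∫ s in (0:ℝ)..t, g' j s)
          = (1/(n:ℝ)) * ∑ i, X i j * ∫ s in (0:ℝ)..t, r' i s := by
        intro t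
        have h1 : (∫ s in (0:ℝ)..t, g' j s)
            = ∫ s in (0:ℝ)..t, ∑ i, ((1/(n:ℝ)) * X i j) * r' i s := by
          apply intervalIntegral.integral_congr
          intro s _
          simp only [hg', Finset.mul_sum]
          exact Finset.sum_congr rfl fun i _ => by ring
        rw [h1, intervalIntegral.integral_finset_sum (f := fun i s => ((1/(n:ℝ)) * X i j) * r' i s)
          (fun i _ => (continuous_const.mul (hr'C i)).intervalIntegrable _ _), Finset.mul_sum]
        exact Finset.sum_congr rfl fun i _ => by
          rw [intervalIntegral.integral_const_mul]; ring
      simp only [heq]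
      exact (tendsto_finset_sum _ fun i _ => (hRlim i).const_mul (X i j)).const_mul (1/(n:ℝ))
    -- splitting the exponent integrals
    have hsplit_p : ∀ t : ℝ, (∫ s in (0:ℝ)..t, (2/(1-μ) * g' j s + η * p' j s))
        = 2/(1-μ) * (∫ s in (0:ℝ)..t, g' j s) + η * ∫ s in (0:ℝ)..t, p' j s := by
      intro t
      rw [intervalIntegral.integral_add (f := fun s => 2/(1-μ) * g' j s) (g := fun s => η * p' j s) ((continuous_const.mul (hg'C j)).intervalIntegrable _ _)
        ((continuous_const.mul (hp'C j)).intervalIntegrable _ _)]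
      congr 1
      · exact intervalIntegral.integral_const_mul _ _
      · exact intervalIntegral.integral_const_mul _ _
    have hsplit_m : ∀ t : ℝ, (∫ s in (0:ℝ)..t, (-2/(1-μ) * g' j s + η * m' j s))
        = -2/(1-μ) * (∫ s in (0:ℝ)..t, g' j s) + η * ∫ s in (0:ℝ)..t, m' j s := by
      intro t
      rw [intervalIntegral.integral_add (f := fun s => -2/(1-μ) * g' j s) (g := fun s => η * m' j s) ((continuous_const.mul (hg'C j)).intervalIntegrable _ _)
        ((continuous_const.mul (hm'C j)).intervalIntegrable _ _)]
      congr 1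
      · exact intervalIntegral.integral_const_mul _ _
      · exact intervalIntegral.integral_const_mul _ _
    have hexp2 : ∀ a : ℝ, Real.exp a ^ 2 = Real.exp (2*a) := by
      intro a; rw [sq, ← Real.exp_add]; ring_nf
    set Γ : ℝ := (1/(n:ℝ)) * ∑ i, X i j * R i with hΓ
    set Pv : ℝ := (εinf j + (4/η) * φinf j)/2 with hPv
    set Mv : ℝ := (εinf j - (4/η) * φinf j)/2 with hMv
    have hweq : (fun t => w t j) =ᶠ[Filter.atTop] (fun t =>
        wp 0 j ^ 2 * Real.exp (2 * -(2/(1-μ) * (∫ s in (0:ℝ)..t, g' j s)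
            + η * ∫ s in (0:ℝ)..t, p' j s))
        - wp 0 j ^ 2 * Real.exp (2 * -(-2/(1-μ) * (∫ s in (0:ℝ)..t, g' j s)
            + η * ∫ s in (0:ℝ)..t, m' j s))) := by
      filter_upwards [Filter.eventually_ge_atTop (0:ℝ)] with t ht
      rw [hwdef, hwp_eq j t ht, hwm_eq j t ht, ← hinit j, mul_pow, mul_pow, hexp2, hexp2,
        hsplit_p t, hsplit_m t]
    have hlim2 : Filter.Tendsto (fun t =>
        wp 0 j ^ 2 * Real.exp (2 * -(2/(1-μ) * (∫ s in (0:ℝ)..t, g' j s)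
            + η * ∫ s in (0:ℝ)..t, p' j s))
        - wp 0 j ^ 2 * Real.exp (2 * -(-2/(1-μ) * (∫ s in (0:ℝ)..t, g' j s)
            + η * ∫ s in (0:ℝ)..t, m' j s))) Filter.atTop
        (nhds (wp 0 j ^ 2 * Real.exp (2 * -(2/(1-μ) * Γ + η * Pv))
          - wp 0 j ^ 2 * Real.exp (2 * -(-2/(1-μ) * Γ + η * Mv)))) := by
      have hexpT : ∀ {f : ℝ → ℝ} {L : ℝ}, Filter.Tendsto f Filter.atTop (nhds L) →
          Filter.Tendsto (fun x => Real.exp (f x)) Filter.atTop (nhds (Real.exp L)) :=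
        fun h => (Real.continuous_exp.tendsto _).comp h
      apply Filter.Tendsto.sub
      · exact (hexpT ((((hGlim.const_mul (2/(1-μ))).add (hPlim.const_mul η)).neg).const_mul
          (2:ℝ))).const_mul _
      · exact (hexpT ((((hGlim.const_mul (-2/(1-μ))).add (hMlim.const_mul η)).neg).const_mul
          (2:ℝ))).const_mul _
    have hwinf_eq : winf j = wp 0 j ^ 2 * Real.exp (2 * -(2/(1-μ) * Γ + η * Pv))
        - wp 0 j ^ 2 * Real.exp (2 * -(-2/(1-μ) * Γ + η * Mv)) :=
      tendsto_nhds_unique (hconv j) (Filter.Tendsto.congr' hweq.symm hlim2)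
    -- algebra
    set S : ℝ := 4/(1-μ) * Γ + 4 * φinf j with hS
    have hκeq : κinf j = wp 0 j ^ 2 * Real.exp (-η * εinf j) := by
      rw [hκinf j, ← hinit j]; ring
    have hE1 : 2 * -(2/(1-μ) * Γ + η * Pv) = -η * εinf j + -S := by
      simp only [hPv, hS]; field_simp; ring
    have hE2 : 2 * -(-2/(1-μ) * Γ + η * Mv) = -η * εinf j + S := by
      simp only [hMv, hS]; field_simp; ring
    have hwinfS : winf j = κinf j * (Real.exp (-S) - Real.exp S) := by
      rw [hwinf_eq, hE1, hE2, hκeq, Real.exp_add, Real.exp_add]; ring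
    have harg : winf j / (2 * κinf j) = -Real.sinh S := by
      rw [hwinfS, Real.sinh_eq]
      have hκne := (hκpos j).ne'
      field_simp
      ring
    rw [harg, ← Real.sinh_neg, Real.arsinh_sinh]
    simp only [hS]
    field_simp
    ring
  -- zero directional derivative along the affine set
  have hz : ∀ i, ∑ j, X i j * (u j - winf j) = 0 := by
    intro i
    have : ∑ j, X i j * (u j - winf j) = (∑ l, X i l * u l) - (∑ l, X i l * winf l) := by
      rw [← Finset.sum_sub_distrib]
      exact Finset.sum_congr rfl fun j _ => by ring
    rw [this, hu i, hinterp i, sub_self]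
  have hzero : ∑ j, (-(1/(1-μ)) * ((1/(n:ℝ)) * ∑ i, X i j * R i)) * (u j - winf j) = 0 := by
    calc ∑ j, (-(1/(1-μ)) * ((1/(n:ℝ)) * ∑ i, X i j * R i)) * (u j - winf j)
        = ∑ j, ∑ i, (-(1/(1-μ)) * (1/(n:ℝ)) * R i) * (X i j * (u j - winf j)) := by
          refine Finset.sum_congr rfl fun j _ => ?_
          simp only [Finset.mul_sum, Finset.sum_mul]
          exact Finset.sum_congr rfl fun i _ => by ring
      _ = ∑ i, ∑ j, (-(1/(1-μ)) * (1/(n:ℝ)) * R i) * (X i j * (u j - winf j)) :=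
          Finset.sum_comm
      _ = ∑ i, (-(1/(1-μ)) * (1/(n:ℝ)) * R i) * ∑ j, X i j * (u j - winf j) := by
          exact Finset.sum_congr rfl fun i _ => (Finset.mul_sum _ _ _).symm
      _ = 0 := by simp only [hz, mul_zero, Finset.sum_const_zero]
  -- conclude by convexity
  rw [hΛ u, hΛ winf, ← sub_nonneg, ← Finset.sum_sub_distrib]
  have hterm : ∀ j ∈ Finset.univ, (-(1/(1-μ)) * ((1/(n:ℝ)) * ∑ i, X i j * R i)) * (u j - winf j)
      ≤ ((1 / 4) * (u j * Real.arsinh (u j / (2 * κinf j))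
        - Real.sqrt (4 * κinf j ^ 2 + u j ^ 2) + 2 * κinf j) + u j * φinf j)
      - ((1 / 4) * (winf j * Real.arsinh (winf j / (2 * κinf j))
        - Real.sqrt (4 * κinf j ^ 2 + winf j ^ 2) + 2 * κinf j) + winf j * φinf j) := by
    intro j _
    have h := stmt15_aux_convex (hκpos j) (φinf j) (winf j) (u j)
    rw [key1 j] at h
    convert h using 2 <;> ring
  calc (0:ℝ) = ∑ j, (-(1/(1-μ)) * ((1/(n:ℝ)) * ∑ i, X i j * R i)) * (u j - winf j) := hzero.symm
    _ ≤ _ := Finset.sum_le_sum hterm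
end

section
/- For the two-layer diagonal linear network with quadratic loss, let μ ∈ (0,1) and define the O(η²)-HBF correction terms γ^{w_±} = ((1+μ)/(2(1−μ)³)) ∇²_{w_±}L ∇_{w_±}L. Then for every (w_+, w_-) with all components nonzero and every j ∈ {1,…,d}: γ^{w_+}_j / w_{+,j} + γ^{w_-}_j / w_{-,j} = (4(1+μ)/(1−μ)³) [ ((∇_w L)_j)² + (1/n) (X^T X (w ⊙ ∇_w L))_j ], where w = w_+ ⊙ w_+ − w_- ⊙ w_-. -/
open ContinuousLinearMap

lemma hasfd_lin {d : ℕ} (v : Fin d → ℝ) (b : ℝ) (u : Fin d → ℝ) :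
    HasFDerivAt (fun u : Fin d → ℝ => (∑ j, v j * u j ^ 2) - b)
      (∑ j, (v j * (2 * u j)) • (proj j : (Fin d → ℝ) →L[ℝ] ℝ)) u := by
  have h1 : ∀ j : Fin d, HasFDerivAt (fun u : Fin d → ℝ => u j ^ 2)
      ((2 * u j) • (proj j : (Fin d → ℝ) →L[ℝ] ℝ)) u := by
    intro j
    have hp := (ContinuousLinearMap.proj j : (Fin d → ℝ) →L[ℝ] ℝ).hasFDerivAt (x := u)
    have := hp.mul hp
    have heq : (fun u : Fin d → ℝ => u j ^ 2) = fun u : Fin d → ℝ =>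
        (proj j : (Fin d → ℝ) →L[ℝ] ℝ) u * (proj j : (Fin d → ℝ) →L[ℝ] ℝ) u := by
      funext u; simp [pow_two]
    rw [heq]
    convert! this using 1
    rw [two_mul, add_smul]; simp
  have := HasFDerivAt.sub_const b (HasFDerivAt.fun_sum (fun j (_ : j ∈ Finset.univ) => ((h1 j).const_mul (v j))))
  convert! this using 2 with j
  rw [smul_smul]

lemma hasfd1 {n d : ℕ} (c : ℝ) (a : Fin n → Fin d → ℝ) (b : Fin n → ℝ) (u : Fin d → ℝ) :
    HasFDerivAt (fun u : Fin d → ℝ => c * ∑ i, ((∑ j, a i j * u j ^ 2) - b i) ^ 2)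
      (∑ i, (c * (2 * ((∑ j, a i j * u j ^ 2) - b i))) •
        ∑ j, (a i j * (2 * u j)) • (proj j : (Fin d → ℝ) →L[ℝ] ℝ)) u := by
  have h2 : ∀ i : Fin n, HasFDerivAt (fun u : Fin d → ℝ => ((∑ j, a i j * u j ^ 2) - b i) ^ 2)
      ((2 * ((∑ j, a i j * u j ^ 2) - b i)) • ∑ j, (a i j * (2 * u j)) • (proj j : (Fin d → ℝ) →L[ℝ] ℝ)) u := by
    intro i
    have hsum := hasfd_lin (fun j => a i j) (b i) u
    have := hsum.mul hsum
    have heq : (fun u : Fin d → ℝ => ((∑ j, a i j * u j ^ 2) - b i) ^ 2)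
        = fun u : Fin d → ℝ => ((∑ j, a i j * u j ^ 2) - b i) * ((∑ j, a i j * u j ^ 2) - b i) := by
      funext u; rw [pow_two]
    rw [heq]
    convert! this using 1
    rw [two_mul, add_smul]
  have := (HasFDerivAt.fun_sum (fun i (_ : i ∈ Finset.univ) => h2 i)).const_mul c
  convert! this using 1
  rw [Finset.smul_sum]
  congr 1 with i
  rw [smul_smul]

lemma hasfd2 {n d : ℕ} (c : ℝ) (a : Fin n → Fin d → ℝ) (b : Fin n → ℝ) (k : Fin d) (u : Fin d → ℝ) :
    HasFDerivAt (fun u : Fin d → ℝ =>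
        ∑ i, (c * (2 * ((∑ j, a i j * u j ^ 2) - b i))) * (a i k * (2 * u k)))
      (∑ i, ((c * (2 * ((∑ j, a i j * u j ^ 2) - b i))) • ((a i k * 2) • (proj k : (Fin d → ℝ) →L[ℝ] ℝ))
        + (a i k * (2 * u k)) • ((c * 2) • ∑ j, (a i j * (2 * u j)) • (proj j : (Fin d → ℝ) →L[ℝ] ℝ)))) u := by
  apply HasFDerivAt.fun_sum
  intro i _
  have hf : HasFDerivAt (fun u : Fin d → ℝ => c * (2 * ((∑ j, a i j * u j ^ 2) - b i)))
      ((c * 2) • ∑ j, (a i j * (2 * u j)) • (proj j : (Fin d → ℝ) →L[ℝ] ℝ)) u := by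
    have := ((hasfd_lin (fun j => a i j) (b i) u).const_mul 2).const_mul c
    convert! this using 1
    rw [smul_smul]
  have hg : HasFDerivAt (fun u : Fin d → ℝ => a i k * (2 * u k))
      ((a i k * 2) • (proj k : (Fin d → ℝ) →L[ℝ] ℝ)) u := by
    have hp := (ContinuousLinearMap.proj k : (Fin d → ℝ) →L[ℝ] ℝ).hasFDerivAt (x := u)
    have := (hp.const_mul (2:ℝ)).const_mul (a i k)
    convert! this using 1
    rw [smul_smul]
  have := hf.mul hg
  convert! this using 1

lemma fd1_apply {n d : ℕ} (c : ℝ) (a : Fin n → Fin d → ℝ) (b : Fin n → ℝ) (k : Fin d) (u : Fin d → ℝ) :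
    fderiv ℝ (fun u : Fin d → ℝ => c * ∑ i, ((∑ j, a i j * u j ^ 2) - b i) ^ 2) u (Pi.single k 1)
      = ∑ i, (c * (2 * ((∑ j, a i j * u j ^ 2) - b i))) * (a i k * (2 * u k)) := by
  rw [(hasfd1 c a b u).fderiv]
  simp [ContinuousLinearMap.sum_apply, Pi.single_apply, mul_ite, Finset.sum_ite_eq']

lemma fd2_apply {n d : ℕ} (c : ℝ) (a : Fin n → Fin d → ℝ) (b : Fin n → ℝ) (k m : Fin d) (u : Fin d → ℝ) :
    fderiv ℝ (fun u : Fin d → ℝ =>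
        ∑ i, (c * (2 * ((∑ j, a i j * u j ^ 2) - b i))) * (a i k * (2 * u k))) u (Pi.single m 1)
      = ∑ i, ((c * (2 * ((∑ j, a i j * u j ^ 2) - b i))) * (a i k * 2) * (if k = m then 1 else 0)
        + (a i k * (2 * u k)) * ((c * 2) * (a i m * (2 * u m)))) := by
  rw [(hasfd2 c a b k u).fderiv]
  simp [ContinuousLinearMap.sum_apply, Pi.single_apply, mul_ite, Finset.sum_ite_eq']

/-- For the O(η²)-HBF correction terms
γ^{w_±} = ((1+μ)/(2(1-μ)³)) ∇²_{w_±}L ∇_{w_±}L of the diagonal linear network,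
γ^{w_+}_j/w_{+,j} + γ^{w_-}_j/w_{-,j}
  = (4(1+μ)/(1-μ)³)[((∇_w L)_j)² + (1/n)(XᵀX(w ⊙ ∇_w L))_j]. -/
theorem stmt_19 (n d : ℕ) (μ : ℝ) (hμ : μ ∈ Set.Ioo (0:ℝ) 1)
    (X : Fin n → Fin d → ℝ) (y : Fin n → ℝ)
    (Loss : (Fin d → ℝ) → (Fin d → ℝ) → ℝ)
    (hLoss : ∀ u v, Loss u v =
      (1 / (2 * (n : ℝ))) * ∑ i, ((∑ j, X i j * (u j ^ 2 - v j ^ 2)) - y i) ^ 2)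
    (wp wm : Fin d → ℝ)
    (hp : ∀ j, wp j ≠ 0) (hm : ∀ j, wm j ≠ 0)
    (w : Fin d → ℝ) (hw : w = fun j => wp j ^ 2 - wm j ^ 2)
    (r : Fin n → ℝ) (hr : r = fun i => (∑ j, X i j * w j) - y i)
    (gradw : Fin d → ℝ) (hgw : gradw = fun j => (1 / (n : ℝ)) * ∑ i, X i j * r i)
    (γp γm : Fin d → ℝ)
    (hγp : ∀ j, γp j = ((1 + μ) / (2 * (1 - μ) ^ 3)) *
      ∑ i, fderiv ℝ (fun u => fderiv ℝ (fun u' => Loss u' wm) u (Pi.single j 1)) wp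
            (Pi.single i 1)
          * fderiv ℝ (fun u' => Loss u' wm) wp (Pi.single i 1))
    (hγm : ∀ j, γm j = ((1 + μ) / (2 * (1 - μ) ^ 3)) *
      ∑ i, fderiv ℝ (fun v => fderiv ℝ (fun v' => Loss wp v') v (Pi.single j 1)) wm
            (Pi.single i 1)
          * fderiv ℝ (fun v' => Loss wp v') wm (Pi.single i 1)) :
    ∀ j, γp j / wp j + γm j / wm j =
      (4 * (1 + μ) / (1 - μ) ^ 3) *
        (gradw j ^ 2 + (1 / (n : ℝ)) * ∑ c, X c j * ∑ l, X c l * (w l * gradw l)) := by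
  intro j
  set c0 : ℝ := 1/(2*(n:ℝ)) with hc0def
  set C : ℝ := (1 + μ) / (2 * (1 - μ) ^ 3) with hCdef
  have hc0 : c0 * 2 = 1/(n:ℝ) := by
    rcases eq_or_ne ((n:ℝ)) 0 with h|h
    · simp [hc0def, h]
    · rw [hc0def]; field_simp
  -- function rewrites
  have hfp : (fun u' : Fin d → ℝ => Loss u' wm)
      = fun u' : Fin d → ℝ => c0 * ∑ i, ((∑ l, X i l * u' l ^ 2) - (y i + ∑ l, X i l * wm l ^ 2)) ^ 2 := by
    funext u
    rw [hLoss]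
    congr 1
    refine Finset.sum_congr rfl fun i _ => ?_
    have h : ∑ l, X i l * (u l ^ 2 - wm l ^ 2)
        = (∑ l, X i l * u l ^ 2) - ∑ l, X i l * wm l ^ 2 := by
      rw [← Finset.sum_sub_distrib]
      exact Finset.sum_congr rfl fun l _ => by ring
    rw [h]; ring
  have hfm : (fun v' : Fin d → ℝ => Loss wp v')
      = fun v' : Fin d → ℝ => c0 * ∑ i, ((∑ l, (-X i l) * v' l ^ 2) - (y i - ∑ l, X i l * wp l ^ 2)) ^ 2 := by
    funext v
    rw [hLoss]
    congr 1
    refine Finset.sum_congr rfl fun i _ => ?_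
    have h : ∑ l, X i l * (wp l ^ 2 - v l ^ 2)
        = (∑ l, X i l * wp l ^ 2) - ∑ l, X i l * v l ^ 2 := by
      rw [← Finset.sum_sub_distrib]
      exact Finset.sum_congr rfl fun l _ => by ring
    have h2 : ∑ l, (-X i l) * v l ^ 2 = -∑ l, X i l * v l ^ 2 := by
      rw [← Finset.sum_neg_distrib]
      exact Finset.sum_congr rfl fun l _ => by ring
    rw [h, h2]; ring
  -- residual identities
  have hrp : ∀ i, (∑ l, X i l * wp l ^ 2) - (y i + ∑ l, X i l * wm l ^ 2) = r i := by
    intro i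
    rw [hr]
    have h : ∑ l, X i l * w l = (∑ l, X i l * wp l ^ 2) - ∑ l, X i l * wm l ^ 2 := by
      rw [← Finset.sum_sub_distrib]
      exact Finset.sum_congr rfl fun l _ => by rw [hw]; ring
    simp only
    rw [h]; ring
  have hrm : ∀ i, (∑ l, (-X i l) * wm l ^ 2) - (y i - ∑ l, X i l * wp l ^ 2) = r i := by
    intro i
    rw [hr]
    have h : ∑ l, X i l * w l = (∑ l, X i l * wp l ^ 2) + ∑ l, (-X i l) * wm l ^ 2 := by
      rw [← Finset.sum_add_distrib]
      exact Finset.sum_congr rfl fun l _ => by rw [hw]; ring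
    simp only
    rw [h]; ring
  -- first derivatives
  have h1p : ∀ i : Fin d, fderiv ℝ (fun u' => Loss u' wm) wp (Pi.single i 1)
      = 2 * wp i * gradw i := by
    intro i
    rw [hfp, fd1_apply]
    calc ∑ cc, (c0 * (2 * ((∑ l, X cc l * wp l ^ 2) - (y cc + ∑ l, X cc l * wm l ^ 2)))) * (X cc i * (2 * wp i))
        = ∑ cc, 2 * wp i * ((1/(n:ℝ)) * (X cc i * r cc)) := by
          refine Finset.sum_congr rfl fun cc _ => ?_
          rw [hrp cc, show (c0 * (2 * r cc)) * (X cc i * (2 * wp i))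
            = (c0 * 2) * (2 * wp i * (X cc i * r cc)) from by ring, hc0]
          ring
      _ = 2 * wp i * gradw i := by
          rw [hgw]; simp only
          rw [Finset.mul_sum, Finset.mul_sum]
  have h1m : ∀ i : Fin d, fderiv ℝ (fun v' => Loss wp v') wm (Pi.single i 1)
      = -(2 * wm i * gradw i) := by
    intro i
    rw [hfm, fd1_apply]
    calc ∑ cc, (c0 * (2 * ((∑ l, (-X cc l) * wm l ^ 2) - (y cc - ∑ l, X cc l * wp l ^ 2)))) * ((-X cc i) * (2 * wm i))
        = ∑ cc, -(2 * wm i * ((1/(n:ℝ)) * (X cc i * r cc))) := by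
          refine Finset.sum_congr rfl fun cc _ => ?_
          rw [hrm cc, show (c0 * (2 * r cc)) * ((-X cc i) * (2 * wm i))
            = (c0 * 2) * (-(2 * wm i * (X cc i * r cc))) from by ring, hc0]
          ring
      _ = -(2 * wm i * gradw i) := by
          rw [Finset.sum_neg_distrib, hgw]; simp only
          rw [Finset.mul_sum, Finset.mul_sum]
  -- second derivatives
  have h2p : ∀ i : Fin d, fderiv ℝ (fun u => fderiv ℝ (fun u' => Loss u' wm) u (Pi.single j 1)) wp (Pi.single i 1)
      = 2 * gradw j * (if j = i then 1 else 0) + (4/(n:ℝ)) * wp j * wp i * ∑ cc, X cc j * X cc i := by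
    intro i
    have hfun : (fun u => fderiv ℝ (fun u' => Loss u' wm) u (Pi.single j 1))
        = fun u : Fin d → ℝ => ∑ cc, (c0 * (2 * ((∑ l, X cc l * u l ^ 2) - (y cc + ∑ l, X cc l * wm l ^ 2)))) * (X cc j * (2 * u j)) := by
      funext u; rw [hfp, fd1_apply]
    rw [hfun, fd2_apply]
    rw [Finset.sum_add_distrib]
    congr 1
    · calc ∑ cc, (c0 * (2 * ((∑ l, X cc l * wp l ^ 2) - (y cc + ∑ l, X cc l * wm l ^ 2)))) * (X cc j * 2) * (if j = i then 1 else 0)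
          = ∑ cc, (2 * ((1/(n:ℝ)) * (X cc j * r cc))) * (if j = i then 1 else 0) := by
            refine Finset.sum_congr rfl fun cc _ => ?_
            rw [hrp cc, show (c0 * (2 * r cc)) * (X cc j * 2)
              = (c0 * 2) * (2 * (X cc j * r cc)) from by ring, hc0]
            ring
        _ = 2 * gradw j * (if j = i then 1 else 0) := by
            rw [← Finset.sum_mul, hgw]; simp only
            rw [Finset.mul_sum, Finset.mul_sum]
    · calc ∑ cc, (X cc j * (2 * wp j)) * ((c0 * 2) * (X cc i * (2 * wp i)))
          = ∑ cc, (4/(n:ℝ)) * wp j * wp i * (X cc j * X cc i) := by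
            refine Finset.sum_congr rfl fun cc _ => ?_
            rw [hc0]; ring
        _ = (4/(n:ℝ)) * wp j * wp i * ∑ cc, X cc j * X cc i := by
            rw [Finset.mul_sum]
  have h2m : ∀ i : Fin d, fderiv ℝ (fun v => fderiv ℝ (fun v' => Loss wp v') v (Pi.single j 1)) wm (Pi.single i 1)
      = -(2 * gradw j * (if j = i then 1 else 0)) + (4/(n:ℝ)) * wm j * wm i * ∑ cc, X cc j * X cc i := by
    intro i
    have hfun : (fun v => fderiv ℝ (fun v' => Loss wp v') v (Pi.single j 1))
        = fun v : Fin d → ℝ => ∑ cc, (c0 * (2 * ((∑ l, (-X cc l) * v l ^ 2) - (y cc - ∑ l, X cc l * wp l ^ 2)))) * ((-X cc j) * (2 * v j)) := by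
      funext v; rw [hfm, fd1_apply]
    rw [hfun, fd2_apply]
    rw [Finset.sum_add_distrib]
    congr 1
    · calc ∑ cc, (c0 * (2 * ((∑ l, (-X cc l) * wm l ^ 2) - (y cc - ∑ l, X cc l * wp l ^ 2)))) * ((-X cc j) * 2) * (if j = i then 1 else 0)
          = ∑ cc, -((2 * ((1/(n:ℝ)) * (X cc j * r cc))) * (if j = i then 1 else 0)) := by
            refine Finset.sum_congr rfl fun cc _ => ?_
            rw [hrm cc, show (c0 * (2 * r cc)) * ((-X cc j) * 2)
              = (c0 * 2) * (-(2 * (X cc j * r cc))) from by ring, hc0]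
            ring
        _ = -(2 * gradw j * (if j = i then 1 else 0)) := by
            rw [Finset.sum_neg_distrib, ← Finset.sum_mul, hgw]; simp only
            rw [Finset.mul_sum, Finset.mul_sum]
    · calc ∑ cc, ((-X cc j) * (2 * wm j)) * ((c0 * 2) * ((-X cc i) * (2 * wm i)))
          = ∑ cc, (4/(n:ℝ)) * wm j * wm i * (X cc j * X cc i) := by
            refine Finset.sum_congr rfl fun cc _ => ?_
            rw [hc0]; ring
        _ = (4/(n:ℝ)) * wm j * wm i * ∑ cc, X cc j * X cc i := by
            rw [Finset.mul_sum]
  -- side computations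
  have hP : γp j / wp j = C * (4 * gradw j ^ 2)
      + ∑ i, C * (8/(n:ℝ)) * (∑ cc, X cc j * X cc i) * (wp i ^ 2 * gradw i) := by
    have hPfull : γp j = wp j * (C * (4 * gradw j ^ 2)
        + ∑ i, C * (8/(n:ℝ)) * (∑ cc, X cc j * X cc i) * (wp i ^ 2 * gradw i)) := by
      rw [hγp j]
      simp only [h1p, h2p]
      calc C * ∑ i, (2 * gradw j * (if j = i then 1 else 0) + (4/(n:ℝ)) * wp j * wp i * ∑ cc, X cc j * X cc i) * (2 * wp i * gradw i)
          = C * ∑ i, ((if j = i then 4 * gradw j * wp i * gradw i else 0)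
              + wp j * ((8/(n:ℝ)) * (∑ cc, X cc j * X cc i) * (wp i ^ 2 * gradw i))) := by
            congr 1
            refine Finset.sum_congr rfl fun i _ => ?_
            split_ifs <;> ring
        _ = wp j * (C * (4 * gradw j ^ 2) + ∑ i, C * (8/(n:ℝ)) * (∑ cc, X cc j * X cc i) * (wp i ^ 2 * gradw i)) := by
            rw [Finset.sum_add_distrib, Finset.sum_ite_eq]
            simp only [Finset.mem_univ, if_true]
            rw [mul_add, mul_add, Finset.mul_sum, Finset.mul_sum]
            congr 1
            · ring
            · refine Finset.sum_congr rfl fun i _ => by ring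
    rw [hPfull, mul_div_cancel_left₀ _ (hp j)]
  have hM : γm j / wm j = C * (4 * gradw j ^ 2)
      - ∑ i, C * (8/(n:ℝ)) * (∑ cc, X cc j * X cc i) * (wm i ^ 2 * gradw i) := by
    have hMfull : γm j = wm j * (C * (4 * gradw j ^ 2)
        - ∑ i, C * (8/(n:ℝ)) * (∑ cc, X cc j * X cc i) * (wm i ^ 2 * gradw i)) := by
      rw [hγm j]
      simp only [h1m, h2m]
      calc C * ∑ i, (-(2 * gradw j * (if j = i then 1 else 0)) + (4/(n:ℝ)) * wm j * wm i * ∑ cc, X cc j * X cc i) * (-(2 * wm i * gradw i))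
          = C * ∑ i, ((if j = i then 4 * gradw j * wm i * gradw i else 0)
              - wm j * ((8/(n:ℝ)) * (∑ cc, X cc j * X cc i) * (wm i ^ 2 * gradw i))) := by
            congr 1
            refine Finset.sum_congr rfl fun i _ => ?_
            split_ifs <;> ring
        _ = wm j * (C * (4 * gradw j ^ 2) - ∑ i, C * (8/(n:ℝ)) * (∑ cc, X cc j * X cc i) * (wm i ^ 2 * gradw i)) := by
            rw [Finset.sum_sub_distrib, Finset.sum_ite_eq]
            simp only [Finset.mem_univ, if_true]
            rw [mul_sub, mul_sub, Finset.mul_sum, Finset.mul_sum]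
            congr 1
            · ring
            · refine Finset.sum_congr rfl fun i _ => by ring
    rw [hMfull, mul_div_cancel_left₀ _ (hm j)]
  -- combine
  have hμ1 : (1:ℝ) - μ ≠ 0 := by
    have := hμ.2; intro h; linarith
  have hK : (4 * (1 + μ) / (1 - μ) ^ 3 : ℝ) = 8 * C := by
    rw [hCdef]; field_simp; ring
  have hS : (∑ i, C * (8/(n:ℝ)) * (∑ cc, X cc j * X cc i) * (wp i ^ 2 * gradw i))
      - (∑ i, C * (8/(n:ℝ)) * (∑ cc, X cc j * X cc i) * (wm i ^ 2 * gradw i))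
      = 8 * C * ((1 / (n : ℝ)) * ∑ c, X c j * ∑ l, X c l * (w l * gradw l)) := by
    rw [← Finset.sum_sub_distrib]
    have step1 : ∀ i : Fin d, C * (8/(n:ℝ)) * (∑ cc, X cc j * X cc i) * (wp i ^ 2 * gradw i)
        - C * (8/(n:ℝ)) * (∑ cc, X cc j * X cc i) * (wm i ^ 2 * gradw i)
        = ∑ cc, 8 * C * ((1/(n:ℝ)) * (X cc j * (X cc i * (w i * gradw i)))) := by
      intro i
      rw [hw]
      rw [show C * (8/(n:ℝ)) * (∑ cc, X cc j * X cc i) * (wp i ^ 2 * gradw i)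
          - C * (8/(n:ℝ)) * (∑ cc, X cc j * X cc i) * (wm i ^ 2 * gradw i)
          = (∑ cc, X cc j * X cc i) * (C * (8/(n:ℝ)) * ((wp i ^ 2 - wm i ^ 2) * gradw i)) from by ring]
      rw [Finset.sum_mul]
      refine Finset.sum_congr rfl fun cc _ => by ring
    calc ∑ i, (C * (8/(n:ℝ)) * (∑ cc, X cc j * X cc i) * (wp i ^ 2 * gradw i)
          - C * (8/(n:ℝ)) * (∑ cc, X cc j * X cc i) * (wm i ^ 2 * gradw i))
        = ∑ i, ∑ cc, 8 * C * ((1/(n:ℝ)) * (X cc j * (X cc i * (w i * gradw i)))) :=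
          Finset.sum_congr rfl fun i _ => step1 i
      _ = ∑ cc, ∑ i, 8 * C * ((1/(n:ℝ)) * (X cc j * (X cc i * (w i * gradw i)))) := Finset.sum_comm
      _ = 8 * C * ((1 / (n : ℝ)) * ∑ c, X c j * ∑ l, X c l * (w l * gradw l)) := by
          simp only [Finset.mul_sum]
  rw [hP, hM, hK]
  linear_combination hS
end
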